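/- arXiv:1911.04770 — 11 statements merged into one kernel-verified Lean document; each statement's English description precedes it below -/
import Mathlib

section
/- Galilean invariance of the constrained KdV system: Let c, k1, k2 be real numbers and let u, v : ℝ × ℝ → ℝ be smooth functions of (x,t) such that v_x = u, v_t = u_xx + 3u², u satisfies the KdV equation u_t = u_xxx + 6u u_x, and (u,v) satisfies equation (eqt) with parameters (k1,k2). Define ũ(X,T) = u(X − 6cT, T) − c and ṽ(X,T) = v(X − 6cT, T) − c(X − 6cT) − 3c²T. Then ṽ_X = ũ, ṽ_T = ũ_XX + 3ũ², ũ satisfies the KdV equation, and (ũ,ṽ) satisfies equation (eqt) with parameters (8c + k1, 8c² + 2k1 c + k2). -/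
/-- Partial derivative in the first (space) variable. -/
noncomputable def dx (f : ℝ → ℝ → ℝ) : ℝ → ℝ → ℝ := fun x t => deriv (fun x' => f x' t) x

/-- Partial derivative in the second (time) variable. -/
noncomputable def dt (f : ℝ → ℝ → ℝ) : ℝ → ℝ → ℝ := fun x t => deriv (fun t' => f x t') t

/-- The KdV equation `u_t = u_xxx + 6 u u_x`. -/
def KdV (u : ℝ → ℝ → ℝ) : Prop :=
  ∀ x t, dt u x t = dx (dx (dx u)) x t + 6 * u x t * dx u x t

/-- `v` is the potential of `u`: `v_x = u`, `v_t = u_xx + 3 u²`. -/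
def Potential (u v : ℝ → ℝ → ℝ) : Prop :=
  ∀ x t, dx v x t = u x t ∧ dt v x t = dx (dx u) x t + 3 * (u x t) ^ 2

/-- Equation (eqt): the stationary equation for the linear combination
`u_{τ5} + k1 u_{τ3} + k2 u_{τ1}` of nonautonomous symmetries of KdV. -/
def Eqt (k1 k2 : ℝ) (u v : ℝ → ℝ → ℝ) : Prop :=
  ∀ x t,
    3 * t * dx (fun x t => dx (dx (dx (dx u))) x t + 10 * u x t * dx (dx u) x t
        + 5 * (dx u x t) ^ 2 + 10 * (u x t) ^ 3) x t
    + x * dx (fun x t => dx (dx u) x t + 3 * (u x t) ^ 2) x t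
    + 4 * dx (dx u) x t + 8 * (u x t) ^ 2 + 2 * dx u x t * v x t
    + k1 * (3 * t * dx (fun x t => dx (dx u) x t + 3 * (u x t) ^ 2) x t
        + x * dx u x t + 2 * u x t)
    + k2 * (6 * t * dx u x t + 1) = 0


section GalileanAux
open Function

lemma dx_eq {f : ℝ → ℝ → ℝ} (hf : ContDiff ℝ (⊤ : ℕ∞) (uncurry f)) (x t : ℝ) :
    dx f x t = fderiv ℝ (uncurry f) (x, t) (1, 0) := by
  have h := ((hf.differentiable (by simp) (x,t)).hasFDerivAt).comp_hasDerivAt x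
    ((hasDerivAt_id x).prodMk (hasDerivAt_const x t))
  exact h.deriv

lemma dt_eq {f : ℝ → ℝ → ℝ} (hf : ContDiff ℝ (⊤ : ℕ∞) (uncurry f)) (x t : ℝ) :
    dt f x t = fderiv ℝ (uncurry f) (x, t) (0, 1) := by
  have h := ((hf.differentiable (by simp) (x,t)).hasFDerivAt).comp_hasDerivAt t
    ((hasDerivAt_const t x).prodMk (hasDerivAt_id t))
  exact h.deriv

lemma hx {f : ℝ → ℝ → ℝ} (hf : ContDiff ℝ (⊤ : ℕ∞) (uncurry f)) (x t : ℝ) :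
    HasDerivAt (fun x' => f x' t) (dx f x t) x := by
  rw [dx_eq hf]
  exact ((hf.differentiable (by simp) (x,t)).hasFDerivAt).comp_hasDerivAt x
    ((hasDerivAt_id x).prodMk (hasDerivAt_const x t))

lemma smooth_dx {f : ℝ → ℝ → ℝ} (hf : ContDiff ℝ (⊤ : ℕ∞) (uncurry f)) :
    ContDiff ℝ (⊤ : ℕ∞) (uncurry (dx f)) := by
  have h : uncurry (dx f) = fun p : ℝ × ℝ => fderiv ℝ (uncurry f) p (1, 0) := by
    funext p; exact dx_eq hf p.1 p.2
  rw [h]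
  exact (hf.fderiv_right (by simp)).clm_apply contDiff_const

lemma ht_shift {f : ℝ → ℝ → ℝ} (hf : ContDiff ℝ (⊤ : ℕ∞) (uncurry f)) (a X T : ℝ) :
    HasDerivAt (fun T' => f (X - a * T') T')
      (dt f (X - a * T) T - a * dx f (X - a * T) T) T := by
  have hγ : HasDerivAt (fun T' : ℝ => ((X - a * T', T') : ℝ × ℝ)) ((-a, 1) : ℝ × ℝ) T := by
    have := ((hasDerivAt_const T X).sub ((hasDerivAt_id T).const_mul a)).prodMk (hasDerivAt_id T)
    simpa using this
  have h := ((hf.differentiable (by simp) (X - a*T, T)).hasFDerivAt).comp_hasDerivAt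
    (f := fun T' : ℝ => ((X - a * T', T') : ℝ × ℝ)) T hγ
  have e : fderiv ℝ (uncurry f) (X - a*T, T) (-a, 1)
      = dt f (X - a*T) T - a * dx f (X - a*T) T := by
    have hv : ((-a, 1) : ℝ × ℝ) = (-a) • ((1:ℝ), (0:ℝ)) + ((0:ℝ), (1:ℝ)) := by
      simp [Prod.ext_iff]
    rw [hv, map_add, map_smul, dx_eq hf, dt_eq hf, smul_eq_mul]; ring
  rw [← e]; exact h

lemma dx_shift {f : ℝ → ℝ → ℝ} (hf : ContDiff ℝ (⊤ : ℕ∞) (uncurry f)) (a : ℝ) :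
    dx (fun X T => f (X - a * T) T) = fun X T => dx f (X - a * T) T := by
  funext X T
  have h0 : HasDerivAt (fun X' : ℝ => X' - a * T) 1 X := (hasDerivAt_id X).sub_const _
  have h : HasDerivAt (fun X' => f (X' - a * T) T) (dx f (X - a * T) T) X := by
    simpa [Function.comp_def] using (hx hf (X - a*T) T).comp X h0
  exact h.deriv

lemma dx_shift_sub {f : ℝ → ℝ → ℝ} (hf : ContDiff ℝ (⊤ : ℕ∞) (uncurry f)) (a k : ℝ) :
    dx (fun X T => f (X - a * T) T - k) = fun X T => dx f (X - a * T) T := by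
  funext X T
  have h0 : HasDerivAt (fun X' : ℝ => X' - a * T) 1 X := (hasDerivAt_id X).sub_const _
  have h : HasDerivAt (fun X' => f (X' - a * T) T - k) (dx f (X - a * T) T) X := by
    simpa [Function.comp_def] using ((hx hf (X - a*T) T).comp X h0).sub_const k
  exact h.deriv


end GalileanAux

/-- Galilean invariance of the constrained KdV system. -/
theorem galilean_invariance (c k1 k2 : ℝ) (u v : ℝ → ℝ → ℝ)
    (hu : ContDiff ℝ (⊤ : ℕ∞) (Function.uncurry u)) (hv : ContDiff ℝ (⊤ : ℕ∞) (Function.uncurry v))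
    (hpot : Potential u v) (hkdv : KdV u) (heqt : Eqt k1 k2 u v) :
    Potential (fun X T => u (X - 6 * c * T) T - c)
      (fun X T => v (X - 6 * c * T) T - c * (X - 6 * c * T) - 3 * c ^ 2 * T) ∧
    KdV (fun X T => u (X - 6 * c * T) T - c) ∧
    Eqt (8 * c + k1) (8 * c ^ 2 + 2 * k1 * c + k2)
      (fun X T => u (X - 6 * c * T) T - c)
      (fun X T => v (X - 6 * c * T) T - c * (X - 6 * c * T) - 3 * c ^ 2 * T) := by

  have hu1 : ContDiff ℝ (⊤ : ℕ∞) (Function.uncurry (dx u)) := smooth_dx hu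
  have hu2 : ContDiff ℝ (⊤ : ℕ∞) (Function.uncurry (dx (dx u))) := smooth_dx hu1
  have hu3 : ContDiff ℝ (⊤ : ℕ∞) (Function.uncurry (dx (dx (dx u)))) := smooth_dx hu2
  have hu4 : ContDiff ℝ (⊤ : ℕ∞) (Function.uncurry (dx (dx (dx (dx u))))) := smooth_dx hu3
  have e1 : dx (fun X T => u (X - 6 * c * T) T - c)
      = fun X T => dx u (X - 6 * c * T) T := dx_shift_sub hu (6 * c) c
  have e2 : dx (fun X T => dx u (X - 6 * c * T) T)
      = fun X T => dx (dx u) (X - 6 * c * T) T := dx_shift hu1 (6 * c)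
  have e3 : dx (fun X T => dx (dx u) (X - 6 * c * T) T)
      = fun X T => dx (dx (dx u)) (X - 6 * c * T) T := dx_shift hu2 (6 * c)
  have e4 : dx (fun X T => dx (dx (dx u)) (X - 6 * c * T) T)
      = fun X T => dx (dx (dx (dx u))) (X - 6 * c * T) T := dx_shift hu3 (6 * c)
  refine ⟨?_, ?_, ?_⟩
  · -- Potential
    intro X T
    have hsh : HasDerivAt (fun X' : ℝ => X' - 6 * c * T) 1 X := (hasDerivAt_id X).sub_const _
    constructor
    · show dx (fun X T => v (X - 6 * c * T) T - c * (X - 6 * c * T) - 3 * c ^ 2 * T) X T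
        = u (X - 6 * c * T) T - c
      have hv1 : HasDerivAt (fun X' => v (X' - 6 * c * T) T) (dx v (X - 6 * c * T) T) X := by
        simpa [Function.comp_def] using (hx hv (X - 6 * c * T) T).comp X hsh
      have H := (hv1.sub (hsh.const_mul c)).sub_const (3 * c ^ 2 * T)
      exact H.deriv.trans (by rw [(hpot (X - 6 * c * T) T).1]; ring)
    · show dt (fun X T => v (X - 6 * c * T) T - c * (X - 6 * c * T) - 3 * c ^ 2 * T) X T = _
      simp only [e1, e2]
      have hv1 := ht_shift hv (6 * c) X T
      have hv2 : HasDerivAt (fun T' : ℝ => c * (X - 6 * c * T')) (c * (0 - 6 * c * 1)) T :=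
        ((hasDerivAt_const T X).sub ((hasDerivAt_id T).const_mul (6 * c))).const_mul c
      have hv3 : HasDerivAt (fun T' : ℝ => 3 * c ^ 2 * T') (3 * c ^ 2 * 1) T :=
        (hasDerivAt_id T).const_mul (3 * c ^ 2)
      have H := (hv1.sub hv2).sub hv3
      refine H.deriv.trans ?_
      rw [(hpot (X - 6 * c * T) T).2, (hpot (X - 6 * c * T) T).1]; ring
  · -- KdV
    intro X T
    simp only [e1, e2, e3]
    have H := (ht_shift hu (6 * c) X T).sub_const c
    exact H.deriv.trans (by rw [hkdv (X - 6 * c * T) T]; ring)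
  · -- Eqt
    intro X T
    simp only [e1, e2, e3, e4]
    have hsh : HasDerivAt (fun X' : ℝ => X' - 6 * c * T) 1 X := (hasDerivAt_id X).sub_const _
    have g0 : HasDerivAt (fun X' => u (X' - 6 * c * T) T) (dx u (X - 6 * c * T) T) X := by
      simpa [Function.comp_def] using (hx hu (X - 6 * c * T) T).comp X hsh
    have g1 : HasDerivAt (fun X' => dx u (X' - 6 * c * T) T)
        (dx (dx u) (X - 6 * c * T) T) X := by
      simpa [Function.comp_def] using (hx hu1 (X - 6 * c * T) T).comp X hsh
    have g2 : HasDerivAt (fun X' => dx (dx u) (X' - 6 * c * T) T)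
        (dx (dx (dx u)) (X - 6 * c * T) T) X := by
      simpa [Function.comp_def] using (hx hu2 (X - 6 * c * T) T).comp X hsh
    have g4 : HasDerivAt (fun X' => dx (dx (dx (dx u))) (X' - 6 * c * T) T)
        (dx (dx (dx (dx (dx u)))) (X - 6 * c * T) T) X := by
      simpa [Function.comp_def] using (hx hu4 (X - 6 * c * T) T).comp X hsh
    -- expand the two compound x-derivatives on the transformed side
    have dL1 : dx (fun x t => dx (dx (dx (dx u))) (x - 6 * c * t) t
          + 10 * (u (x - 6 * c * t) t - c) * dx (dx u) (x - 6 * c * t) t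
          + 5 * dx u (x - 6 * c * t) t ^ 2 + 10 * (u (x - 6 * c * t) t - c) ^ 3) X T
        = dx (dx (dx (dx (dx u)))) (X - 6 * c * T) T
          + 20 * dx u (X - 6 * c * T) T * dx (dx u) (X - 6 * c * T) T
          + 10 * (u (X - 6 * c * T) T - c) * dx (dx (dx u)) (X - 6 * c * T) T
          + 30 * (u (X - 6 * c * T) T - c) ^ 2 * dx u (X - 6 * c * T) T := by
      have H := ((g4.add (((g0.sub_const c).const_mul 10).mul g2)).add
          ((g1.pow 2).const_mul 5)).add (((g0.sub_const c).pow 3).const_mul 10)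
      refine H.deriv.trans ?_
      norm_num; ring
    have dL2 : dx (fun x t => dx (dx u) (x - 6 * c * t) t
          + 3 * (u (x - 6 * c * t) t - c) ^ 2) X T
        = dx (dx (dx u)) (X - 6 * c * T) T
          + 6 * (u (X - 6 * c * T) T - c) * dx u (X - 6 * c * T) T := by
      have H := g2.add (((g0.sub_const c).pow 2).const_mul 3)
      refine H.deriv.trans ?_
      norm_num; ring
    -- expand the original equation at the shifted point
    have E := heqt (X - 6 * c * T) T
    have dA : dx (fun x t => dx (dx (dx (dx u))) x t + 10 * u x t * dx (dx u) x t
          + 5 * (dx u x t) ^ 2 + 10 * (u x t) ^ 3) (X - 6 * c * T) T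
        = dx (dx (dx (dx (dx u)))) (X - 6 * c * T) T
          + 20 * dx u (X - 6 * c * T) T * dx (dx u) (X - 6 * c * T) T
          + 10 * u (X - 6 * c * T) T * dx (dx (dx u)) (X - 6 * c * T) T
          + 30 * u (X - 6 * c * T) T ^ 2 * dx u (X - 6 * c * T) T := by
      have H := (((hx hu4 (X - 6 * c * T) T).add
          (((hx hu (X - 6 * c * T) T).const_mul 10).mul (hx hu2 (X - 6 * c * T) T))).add
          (((hx hu1 (X - 6 * c * T) T).pow 2).const_mul 5)).add
          (((hx hu (X - 6 * c * T) T).pow 3).const_mul 10)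
      refine H.deriv.trans ?_
      norm_num; ring
    have dB : dx (fun x t => dx (dx u) x t + 3 * (u x t) ^ 2) (X - 6 * c * T) T
        = dx (dx (dx u)) (X - 6 * c * T) T
          + 6 * u (X - 6 * c * T) T * dx u (X - 6 * c * T) T := by
      have H := (hx hu2 (X - 6 * c * T) T).add
          (((hx hu (X - 6 * c * T) T).pow 2).const_mul 3)
      refine H.deriv.trans ?_
      norm_num; ring
    rw [dA, dB] at E
    rw [dL1, dL2]
    linear_combination E
end

section
/- First half of Proposition 2 (reduction to the systems (Dx), (Dt)): Let u, v : ℝ × ℝ → ℝ be smooth, with v_x = u and v_t = u_xx + 3u², such that u satisfies the KdV equation u_t = u_xxx + 6u u_x and (u,v) satisfies equation (eqt) with parameters k1 = −4, k2 = 0. Define y := 3t(u_xx + 3u²) + xu + v − 2(6tu + x). Then the pair (u,y) satisfies both equations of system (Dx) and both equations of system (Dt) on ℝ × ℝ. -/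
/-- Pointwise form of system (Dx): the stationary equation and the equation for `y`. -/
def DxEqAt (u y : ℝ → ℝ → ℝ) (x t : ℝ) : Prop :=
  3 * t * (dx (dx (dx u)) x t + 6 * u x t * dx u x t - 4 * dx u x t)
      + x * dx u x t + 2 * u x t - dx y x t - 2 = 0 ∧
  dx (dx (dx y)) x t + 4 * u x t * dx y x t + 2 * dx u x t * y x t = 0

/-- Pointwise form of system (Dt): the KdV flow for `u` and the induced flow for `y`. -/
def DtEqAt (u y : ℝ → ℝ → ℝ) (x t : ℝ) : Prop :=
  dt u x t = dx (dx (dx u)) x t + 6 * u x t * dx u x t ∧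
  dt y x t = 2 * u x t * dx y x t - 2 * dx u x t * y x t

/-- The first integral `H0 = 2 y y_xx - y_x² + 4 u y²`. -/
noncomputable def H0expr (u y : ℝ → ℝ → ℝ) : ℝ → ℝ → ℝ := fun x t =>
  2 * y x t * dx (dx y) x t - (dx y x t) ^ 2 + 4 * u x t * (y x t) ^ 2

/-- The function `z = 12 t u + 2 x + y`. -/
noncomputable def zfun (u y : ℝ → ℝ → ℝ) : ℝ → ℝ → ℝ := fun x t =>
  12 * t * u x t + 2 * x + y x t

/-- The first integral `H1 = 2 z z_xx - z_x² + 4 (u - 1) z²` with `z = 12 t u + 2 x + y`. -/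
noncomputable def H1expr (u y : ℝ → ℝ → ℝ) : ℝ → ℝ → ℝ := fun x t =>
  2 * zfun u y x t * dx (dx (zfun u y)) x t - (dx (zfun u y) x t) ^ 2
    + 4 * (u x t - 1) * (zfun u y x t) ^ 2

lemma dx_eq_fderiv {f : ℝ → ℝ → ℝ} (hf : ContDiff ℝ (⊤ : ℕ∞) (Function.uncurry f)) (x t : ℝ) :
    dx f x t = fderiv ℝ (Function.uncurry f) (x, t) (1, 0) := by
  have h1 : HasDerivAt (fun x' : ℝ => ((x', t) : ℝ × ℝ)) ((1:ℝ), (0:ℝ)) x :=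
    (hasDerivAt_id x).prodMk (hasDerivAt_const x t)
  exact ((hf.differentiable (by simp) (x, t)).hasFDerivAt.comp_hasDerivAt x h1).deriv

lemma dt_eq_fderiv {f : ℝ → ℝ → ℝ} (hf : ContDiff ℝ (⊤ : ℕ∞) (Function.uncurry f)) (x t : ℝ) :
    dt f x t = fderiv ℝ (Function.uncurry f) (x, t) (0, 1) := by
  have h1 : HasDerivAt (fun t' : ℝ => ((x, t') : ℝ × ℝ)) ((0:ℝ), (1:ℝ)) t :=
    (hasDerivAt_const t x).prodMk (hasDerivAt_id t)
  exact ((hf.differentiable (by simp) (x, t)).hasFDerivAt.comp_hasDerivAt t h1).deriv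

lemma hasDerivAt_slice_x {f : ℝ → ℝ → ℝ} (hf : ContDiff ℝ (⊤ : ℕ∞) (Function.uncurry f)) (x t : ℝ) :
    HasDerivAt (fun x' => f x' t) (dx f x t) x := by
  have h1 : HasDerivAt (fun x' : ℝ => ((x', t) : ℝ × ℝ)) ((1:ℝ), (0:ℝ)) x :=
    (hasDerivAt_id x).prodMk (hasDerivAt_const x t)
  have h2 := (hf.differentiable (by simp) (x, t)).hasFDerivAt.comp_hasDerivAt x h1
  rw [dx_eq_fderiv hf x t]; exact h2

lemma hasDerivAt_slice_t {f : ℝ → ℝ → ℝ} (hf : ContDiff ℝ (⊤ : ℕ∞) (Function.uncurry f)) (x t : ℝ) :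
    HasDerivAt (fun t' => f x t') (dt f x t) t := by
  have h1 : HasDerivAt (fun t' : ℝ => ((x, t') : ℝ × ℝ)) ((0:ℝ), (1:ℝ)) t :=
    (hasDerivAt_const t x).prodMk (hasDerivAt_id t)
  have h2 := (hf.differentiable (by simp) (x, t)).hasFDerivAt.comp_hasDerivAt t h1
  rw [dt_eq_fderiv hf x t]; exact h2

lemma contDiff_dx {f : ℝ → ℝ → ℝ} (hf : ContDiff ℝ (⊤ : ℕ∞) (Function.uncurry f)) :
    ContDiff ℝ (⊤ : ℕ∞) (Function.uncurry (dx f)) := by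
  have h : Function.uncurry (dx f) = fun p : ℝ × ℝ => fderiv ℝ (Function.uncurry f) p (1, 0) := by
    funext p; exact dx_eq_fderiv hf p.1 p.2
  rw [h]; exact (hf.fderiv_right (by simp)).clm_apply contDiff_const

lemma dt_dx_comm {f : ℝ → ℝ → ℝ} (hf : ContDiff ℝ (⊤ : ℕ∞) (Function.uncurry f)) (x t : ℝ) :
    dt (dx f) x t = dx (dt f) x t := by
  set F := Function.uncurry f with hF
  set G := fderiv ℝ F with hG
  have hGd : Differentiable ℝ G := (hf.fderiv_right (m := (⊤ : ℕ∞)) (by simp)).differentiable (by simp)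
  have key : ∀ c : ℝ × ℝ, ∀ p : ℝ × ℝ,
      HasFDerivAt (fun q => G q c) (((ContinuousLinearMap.apply ℝ ℝ c).comp (fderiv ℝ G p))) p :=
    fun c p => (ContinuousLinearMap.apply ℝ ℝ c).hasFDerivAt.comp p (hGd p).hasFDerivAt
  have e1 : dt (dx f) x t = fderiv ℝ G (x, t) (0, 1) (1, 0) := by
    have hfun : (fun t' => dx f x t') = fun t' => G (x, t') ((1:ℝ), (0:ℝ)) := by
      funext t'; exact dx_eq_fderiv hf x t'
    have h1 : HasDerivAt (fun t' : ℝ => ((x, t') : ℝ × ℝ)) ((0:ℝ), (1:ℝ)) t :=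
      (hasDerivAt_const t x).prodMk (hasDerivAt_id t)
    have h2 := (key ((1:ℝ),(0:ℝ)) (x, t)).comp_hasDerivAt t h1
    show deriv (fun t' => dx f x t') t = _
    rw [hfun]; exact h2.deriv
  have e2 : dx (dt f) x t = fderiv ℝ G (x, t) (1, 0) (0, 1) := by
    have hfun : (fun x' => dt f x' t) = fun x' => G (x', t) ((0:ℝ), (1:ℝ)) := by
      funext x'; exact dt_eq_fderiv hf x' t
    have h1 : HasDerivAt (fun x' : ℝ => ((x', t) : ℝ × ℝ)) ((1:ℝ), (0:ℝ)) x :=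
      (hasDerivAt_id x).prodMk (hasDerivAt_const x t)
    have h2 := (key ((0:ℝ),(1:ℝ)) (x, t)).comp_hasDerivAt x h1
    show deriv (fun x' => dt f x' t) x = _
    rw [hfun]; exact h2.deriv
  rw [e1, e2]
  exact second_derivative_symmetric
    (fun y => (hf.differentiable (by simp) y).hasFDerivAt) (hGd (x, t)).hasFDerivAt _ _

/-- First half of Proposition 2: a solution of KdV with the constraint (eqt)
(`k1 = -4`, `k2 = 0`) gives, via `y = 3t(u_xx + 3u²) + xu + v - 2(6tu + x)`,
a solution of the systems (Dx) and (Dt). -/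
theorem eqt_to_systems (u v : ℝ → ℝ → ℝ)
    (hu : ContDiff ℝ (⊤ : ℕ∞) (Function.uncurry u)) (hv : ContDiff ℝ (⊤ : ℕ∞) (Function.uncurry v))
    (hpot : Potential u v) (hkdv : KdV u) (heqt : Eqt (-4) 0 u v) :
    ∀ x t,
      DxEqAt u (fun x t => 3 * t * (dx (dx u) x t + 3 * (u x t) ^ 2) + x * u x t
          + v x t - 2 * (6 * t * u x t + x)) x t ∧
      DtEqAt u (fun x t => 3 * t * (dx (dx u) x t + 3 * (u x t) ^ 2) + x * u x t
          + v x t - 2 * (6 * t * u x t + x)) x t := by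
  have hu1 : ContDiff ℝ (⊤ : ℕ∞) (Function.uncurry (dx u)) := contDiff_dx hu
  have hu2 : ContDiff ℝ (⊤ : ℕ∞) (Function.uncurry (dx (dx u))) := contDiff_dx hu1
  have hu3 : ContDiff ℝ (⊤ : ℕ∞) (Function.uncurry (dx (dx (dx u)))) := contDiff_dx hu2
  have hu4 : ContDiff ℝ (⊤ : ℕ∞) (Function.uncurry (dx (dx (dx (dx u))))) := contDiff_dx hu3
  set Y : ℝ → ℝ → ℝ := fun x t => 3 * t * (dx (dx u) x t + 3 * (u x t) ^ 2) + x * u x t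
      + v x t - 2 * (6 * t * u x t + x) with hYdef
  -- first x-derivative of Y
  have hY1 : ∀ x t : ℝ, dx Y x t
      = 3 * t * (dx (dx (dx u)) x t + 6 * u x t * dx u x t - 4 * dx u x t)
        + x * dx u x t + 2 * u x t - 2 := by
    intro x t
    have h0 := hasDerivAt_slice_x hu x t
    have h2 := hasDerivAt_slice_x hu2 x t
    have hvx := hasDerivAt_slice_x hv x t
    have H : HasDerivAt (fun x' => 3 * t * (dx (dx u) x' t + 3 * (u x' t) ^ 2) + x' * u x' t
        + v x' t - 2 * (6 * t * u x' t + x'))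
        (3 * t * (dx (dx (dx u)) x t + 3 * (2 * u x t ^ 1 * dx u x t))
          + (1 * u x t + x * dx u x t) + dx v x t
          - 2 * (6 * t * dx u x t + 1)) x := by
      exact ((((h2.add ((h0.pow 2).const_mul 3)).const_mul (3*t)).add
        ((hasDerivAt_id' x).mul h0)).add hvx).sub
        (((h0.const_mul (6*t)).add (hasDerivAt_id' x)).const_mul 2)
    show deriv (fun x' => 3 * t * (dx (dx u) x' t + 3 * (u x' t) ^ 2) + x' * u x' t
        + v x' t - 2 * (6 * t * u x' t + x')) x = _
    rw [H.deriv, (hpot x t).1]; ring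
  -- second x-derivative of Y
  have hY2 : ∀ x t : ℝ, dx (dx Y) x t
      = 3 * t * (dx (dx (dx (dx u))) x t + 6 * (dx u x t) ^ 2 + 6 * u x t * dx (dx u) x t
          - 4 * dx (dx u) x t) + x * dx (dx u) x t + 3 * dx u x t := by
    intro x t
    have hfun : (fun x' => dx Y x' t)
        = fun x' => 3 * t * (dx (dx (dx u)) x' t + 6 * u x' t * dx u x' t - 4 * dx u x' t)
          + x' * dx u x' t + 2 * u x' t - 2 := funext fun x' => hY1 x' t
    have h0 := hasDerivAt_slice_x hu x t
    have h1 := hasDerivAt_slice_x hu1 x t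
    have h3 := hasDerivAt_slice_x hu3 x t
    have H : HasDerivAt (fun x' => 3 * t * (dx (dx (dx u)) x' t + 6 * u x' t * dx u x' t
          - 4 * dx u x' t) + x' * dx u x' t + 2 * u x' t - 2)
        (3 * t * (dx (dx (dx (dx u))) x t
            + (6 * dx u x t * dx u x t + 6 * u x t * dx (dx u) x t) - 4 * dx (dx u) x t)
          + (1 * dx u x t + x * dx (dx u) x t) + 2 * dx u x t) x := by
      exact ((((h3.add ((h0.const_mul 6).mul h1)).sub (h1.const_mul 4)).const_mul (3*t)).add
        ((hasDerivAt_id' x).mul h1)).add (h0.const_mul 2) |>.sub_const 2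
    show deriv (fun x' => dx Y x' t) x = _
    rw [hfun, H.deriv]; ring
  -- third x-derivative of Y
  have hY3 : ∀ x t : ℝ, dx (dx (dx Y)) x t
      = 3 * t * (dx (dx (dx (dx (dx u)))) x t + 18 * dx u x t * dx (dx u) x t
          + 6 * u x t * dx (dx (dx u)) x t - 4 * dx (dx (dx u)) x t)
        + x * dx (dx (dx u)) x t + 4 * dx (dx u) x t := by
    intro x t
    have hfun : (fun x' => dx (dx Y) x' t)
        = fun x' => 3 * t * (dx (dx (dx (dx u))) x' t + 6 * (dx u x' t) ^ 2
            + 6 * u x' t * dx (dx u) x' t - 4 * dx (dx u) x' t)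
          + x' * dx (dx u) x' t + 3 * dx u x' t := funext fun x' => hY2 x' t
    have h0 := hasDerivAt_slice_x hu x t
    have h1 := hasDerivAt_slice_x hu1 x t
    have h2 := hasDerivAt_slice_x hu2 x t
    have h3 := hasDerivAt_slice_x hu3 x t
    have h4 := hasDerivAt_slice_x hu4 x t
    have H : HasDerivAt (fun x' => 3 * t * (dx (dx (dx (dx u))) x' t + 6 * (dx u x' t) ^ 2
            + 6 * u x' t * dx (dx u) x' t - 4 * dx (dx u) x' t)
          + x' * dx (dx u) x' t + 3 * dx u x' t)
        (3 * t * (dx (dx (dx (dx (dx u)))) x t + 6 * (2 * dx u x t ^ 1 * dx (dx u) x t)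
            + (6 * dx u x t * dx (dx u) x t + 6 * u x t * dx (dx (dx u)) x t)
            - 4 * dx (dx (dx u)) x t)
          + (1 * dx (dx u) x t + x * dx (dx (dx u)) x t) + 3 * dx (dx u) x t) x := by
      exact (((((h4.add ((h1.pow 2).const_mul 6)).add ((h0.const_mul 6).mul h2)).sub
        (h2.const_mul 4)).const_mul (3*t)).add ((hasDerivAt_id' x).mul h2)).add (h1.const_mul 3)
    show deriv (fun x' => dx (dx Y) x' t) x = _
    rw [hfun, H.deriv]; ring
  -- the two inner derivatives in (eqt)
  have hB : ∀ x t : ℝ, dx (fun x t => dx (dx u) x t + 3 * (u x t) ^ 2) x t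
      = dx (dx (dx u)) x t + 6 * u x t * dx u x t := by
    intro x t
    have h0 := hasDerivAt_slice_x hu x t
    have h2 := hasDerivAt_slice_x hu2 x t
    have H : HasDerivAt (fun x' => dx (dx u) x' t + 3 * (u x' t) ^ 2)
        (dx (dx (dx u)) x t + 3 * (2 * u x t ^ 1 * dx u x t)) x :=
      h2.add ((h0.pow 2).const_mul 3)
    show deriv (fun x' => dx (dx u) x' t + 3 * (u x' t) ^ 2) x = _
    rw [H.deriv]; ring
  have hA : ∀ x t : ℝ, dx (fun x t => dx (dx (dx (dx u))) x t + 10 * u x t * dx (dx u) x t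
        + 5 * (dx u x t) ^ 2 + 10 * (u x t) ^ 3) x t
      = dx (dx (dx (dx (dx u)))) x t + 20 * dx u x t * dx (dx u) x t
        + 10 * u x t * dx (dx (dx u)) x t + 30 * (u x t) ^ 2 * dx u x t := by
    intro x t
    have h0 := hasDerivAt_slice_x hu x t
    have h1 := hasDerivAt_slice_x hu1 x t
    have h2 := hasDerivAt_slice_x hu2 x t
    have h4 := hasDerivAt_slice_x hu4 x t
    have H : HasDerivAt (fun x' => dx (dx (dx (dx u))) x' t + 10 * u x' t * dx (dx u) x' t
          + 5 * (dx u x' t) ^ 2 + 10 * (u x' t) ^ 3)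
        (dx (dx (dx (dx (dx u)))) x t
          + (10 * dx u x t * dx (dx u) x t + 10 * u x t * dx (dx (dx u)) x t)
          + 5 * (2 * dx u x t ^ 1 * dx (dx u) x t)
          + 10 * (3 * u x t ^ 2 * dx u x t)) x := by
      exact ((h4.add ((h0.const_mul 10).mul h2)).add ((h1.pow 2).const_mul 5)).add
        ((h0.pow 3).const_mul 10)
    show deriv (fun x' => dx (dx (dx (dx u))) x' t + 10 * u x' t * dx (dx u) x' t
        + 5 * (dx u x' t) ^ 2 + 10 * (u x' t) ^ 3) x = _
    rw [H.deriv]; ring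
  -- time derivatives of dx u and dx (dx u) via commutation and KdV
  have hdtu1 : ∀ x t : ℝ, dt (dx u) x t
      = dx (dx (dx (dx u))) x t + 6 * (dx u x t) ^ 2 + 6 * u x t * dx (dx u) x t := by
    intro x t
    rw [dt_dx_comm hu x t]
    have hfun : (fun x' => dt u x' t)
        = fun x' => dx (dx (dx u)) x' t + 6 * u x' t * dx u x' t := funext fun x' => hkdv x' t
    have h0 := hasDerivAt_slice_x hu x t
    have h1 := hasDerivAt_slice_x hu1 x t
    have h3 := hasDerivAt_slice_x hu3 x t
    have H : HasDerivAt (fun x' => dx (dx (dx u)) x' t + 6 * u x' t * dx u x' t)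
        (dx (dx (dx (dx u))) x t
          + (6 * dx u x t * dx u x t + 6 * u x t * dx (dx u) x t)) x :=
      h3.add ((h0.const_mul 6).mul h1)
    show deriv (fun x' => dt u x' t) x = _
    rw [hfun, H.deriv]; ring
  have hdtu2 : ∀ x t : ℝ, dt (dx (dx u)) x t
      = dx (dx (dx (dx (dx u)))) x t + 18 * dx u x t * dx (dx u) x t
        + 6 * u x t * dx (dx (dx u)) x t := by
    intro x t
    rw [dt_dx_comm hu1 x t]
    have hfun : (fun x' => dt (dx u) x' t)
        = fun x' => dx (dx (dx (dx u))) x' t + 6 * (dx u x' t) ^ 2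
          + 6 * u x' t * dx (dx u) x' t := funext fun x' => hdtu1 x' t
    have h0 := hasDerivAt_slice_x hu x t
    have h1 := hasDerivAt_slice_x hu1 x t
    have h2 := hasDerivAt_slice_x hu2 x t
    have h3 := hasDerivAt_slice_x hu3 x t
    have h4 := hasDerivAt_slice_x hu4 x t
    have H : HasDerivAt (fun x' => dx (dx (dx (dx u))) x' t + 6 * (dx u x' t) ^ 2
          + 6 * u x' t * dx (dx u) x' t)
        (dx (dx (dx (dx (dx u)))) x t + 6 * (2 * dx u x t ^ 1 * dx (dx u) x t)
          + (6 * dx u x t * dx (dx u) x t + 6 * u x t * dx (dx (dx u)) x t)) x :=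
      (h4.add ((h1.pow 2).const_mul 6)).add ((h0.const_mul 6).mul h2)
    show deriv (fun x' => dt (dx u) x' t) x = _
    rw [hfun, H.deriv]; ring
  -- time derivative of Y
  have hYt : ∀ x t : ℝ, dt Y x t
      = 3 * 1 * (dx (dx u) x t + 3 * (u x t) ^ 2)
        + 3 * t * (dt (dx (dx u)) x t + 3 * (2 * u x t ^ 1 * dt u x t))
        + x * dt u x t + dt v x t
        - 2 * (6 * 1 * u x t + 6 * t * dt u x t) := by
    intro x t
    have k0 := hasDerivAt_slice_t hu x t
    have k2 := hasDerivAt_slice_t hu2 x t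
    have kv := hasDerivAt_slice_t hv x t
    have H : HasDerivAt (fun t' => 3 * t' * (dx (dx u) x t' + 3 * (u x t') ^ 2) + x * u x t'
        + v x t' - 2 * (6 * t' * u x t' + x))
        (3 * 1 * (dx (dx u) x t + 3 * (u x t) ^ 2)
          + 3 * t * (dt (dx (dx u)) x t + 3 * (2 * u x t ^ 1 * dt u x t))
          + x * dt u x t + dt v x t
          - 2 * (6 * 1 * u x t + 6 * t * dt u x t)) t := by
      exact (((((hasDerivAt_id' t).const_mul 3).mul (k2.add ((k0.pow 2).const_mul 3))).add
        (k0.const_mul x)).add kv).sub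
        (((((hasDerivAt_id' t).const_mul 6).mul k0).add_const x).const_mul 2)
    show deriv (fun t' => 3 * t' * (dx (dx u) x t' + 3 * (u x t') ^ 2) + x * u x t'
        + v x t' - 2 * (6 * t' * u x t' + x)) t = _
    exact H.deriv
  -- main argument
  intro x t
  have E0 := heqt x t
  rw [hA x t, hB x t] at E0
  refine ⟨⟨?_, ?_⟩, ?_, ?_⟩
  · rw [hY1 x t]; ring
  · rw [hY3 x t, hY1 x t, hYdef]
    simp only []
    linear_combination E0
  · exact hkdv x t
  · rw [hYt x t, hY1 x t, hdtu2 x t, hkdv x t, (hpot x t).2, hYdef]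
    simp only []
    linear_combination E0
end

section
/- H1 is a first integral: Let u, y : ℝ × ℝ → ℝ be smooth functions satisfying both equations of system (Dx): 3t(u_xxx + 6u u_x − 4u_x) + x u_x + 2u − y_x − 2 = 0 and y_xxx + 4u y_x + 2u_x y = 0, and both equations of system (Dt): u_t = u_xxx + 6u u_x and y_t = 2u y_x − 2u_x y, identically on ℝ × ℝ. Define z := 12tu + 2x + y. Then the function H1 := 2z z_xx − z_x² + 4(u − 1) z² is constant on ℝ × ℝ. -/
namespace H1Aux
def Sm (f : ℝ → ℝ → ℝ) : Prop := ContDiff ℝ (⊤ : ℕ∞) (Function.uncurry f)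

theorem Sm.diffx {f : ℝ → ℝ → ℝ} (hf : Sm f) (x t : ℝ) :
    DifferentiableAt ℝ (fun x' => f x' t) x := by
  have h1 : HasDerivAt (fun x' : ℝ => (x', t)) ((1 : ℝ), (0 : ℝ)) x :=
    (hasDerivAt_id x).prodMk (hasDerivAt_const x t)
  exact ((hf.differentiable (by simp) (x, t)).hasFDerivAt.comp_hasDerivAt x h1).differentiableAt

theorem Sm.difft {f : ℝ → ℝ → ℝ} (hf : Sm f) (x t : ℝ) :
    DifferentiableAt ℝ (fun t' => f x t') t := by
  have h1 : HasDerivAt (fun t' : ℝ => (x, t')) ((0 : ℝ), (1 : ℝ)) t :=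
    (hasDerivAt_const t x).prodMk (hasDerivAt_id t)
  exact ((hf.differentiable (by simp) (x, t)).hasFDerivAt.comp_hasDerivAt t h1).differentiableAt

theorem Sm.hx {f : ℝ → ℝ → ℝ} (hf : Sm f) (x t : ℝ) :
    HasDerivAt (fun x' => f x' t) (dx f x t) x := (hf.diffx x t).hasDerivAt

theorem Sm.ht {f : ℝ → ℝ → ℝ} (hf : Sm f) (x t : ℝ) :
    HasDerivAt (fun t' => f x t') (dt f x t) t := (hf.difft x t).hasDerivAt

theorem dx_eq_fderiv {f : ℝ → ℝ → ℝ} (hf : Sm f) (x t : ℝ) :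
    dx f x t = fderiv ℝ (Function.uncurry f) (x, t) (1, 0) := by
  have h1 : HasDerivAt (fun x' : ℝ => (x', t)) ((1 : ℝ), (0 : ℝ)) x :=
    (hasDerivAt_id x).prodMk (hasDerivAt_const x t)
  exact ((hf.differentiable (by simp) (x, t)).hasFDerivAt.comp_hasDerivAt x h1).deriv

theorem dt_eq_fderiv {f : ℝ → ℝ → ℝ} (hf : Sm f) (x t : ℝ) :
    dt f x t = fderiv ℝ (Function.uncurry f) (x, t) (0, 1) := by
  have h1 : HasDerivAt (fun t' : ℝ => (x, t')) ((0 : ℝ), (1 : ℝ)) t :=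
    (hasDerivAt_const t x).prodMk (hasDerivAt_id t)
  exact ((hf.differentiable (by simp) (x, t)).hasFDerivAt.comp_hasDerivAt t h1).deriv

theorem uncurry_dx {f : ℝ → ℝ → ℝ} (hf : Sm f) :
    Function.uncurry (dx f) = fun p : ℝ × ℝ => fderiv ℝ (Function.uncurry f) p (1, 0) := by
  funext p
  exact dx_eq_fderiv hf p.1 p.2

theorem uncurry_dt {f : ℝ → ℝ → ℝ} (hf : Sm f) :
    Function.uncurry (dt f) = fun p : ℝ × ℝ => fderiv ℝ (Function.uncurry f) p (0, 1) := by
  funext p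
  exact dt_eq_fderiv hf p.1 p.2

theorem Sm.dx {f : ℝ → ℝ → ℝ} (hf : Sm f) : Sm (dx f) := by
  rw [Sm, uncurry_dx hf]
  exact (hf.fderiv_right (by simp)).clm_apply contDiff_const

theorem Sm.dt {f : ℝ → ℝ → ℝ} (hf : Sm f) : Sm (dt f) := by
  rw [Sm, uncurry_dt hf]
  exact (hf.fderiv_right (by simp)).clm_apply contDiff_const

theorem swap_dt_dx {f : ℝ → ℝ → ℝ} (hf : Sm f) (x t : ℝ) :
    dt (dx f) x t = dx (dt f) x t := by
  set U := Function.uncurry f with hU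
  have h2 : ContDiff ℝ (⊤ : ℕ∞) (fderiv ℝ U) := hf.fderiv_right (by simp)
  have key : ∀ (p : ℝ × ℝ) (v w : ℝ × ℝ),
      fderiv ℝ (fun q => fderiv ℝ U q v) p w = fderiv ℝ (fderiv ℝ U) p w v := by
    intro p v w
    rw [fderiv_clm_apply (h2.differentiable (by simp) p) (differentiableAt_const v)]
    simp
  have hsymm : fderiv ℝ (fderiv ℝ U) (x, t) (0, 1) (1, 0)
      = fderiv ℝ (fderiv ℝ U) (x, t) (1, 0) (0, 1) := by
    exact second_derivative_symmetric
      (fun p => (hf.differentiable (by simp) p).hasFDerivAt)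
      ((h2.differentiable (by simp) (x, t)).hasFDerivAt) _ _
  calc dt (dx f) x t = fderiv ℝ (Function.uncurry (dx f)) (x, t) (0, 1) :=
        dt_eq_fderiv hf.dx x t
    _ = fderiv ℝ (fun q => fderiv ℝ U q (1, 0)) (x, t) (0, 1) := by rw [uncurry_dx hf]
    _ = fderiv ℝ (fderiv ℝ U) (x, t) (0, 1) (1, 0) := key _ _ _
    _ = fderiv ℝ (fderiv ℝ U) (x, t) (1, 0) (0, 1) := hsymm
    _ = fderiv ℝ (fun q => fderiv ℝ U q (0, 1)) (x, t) (1, 0) := (key _ _ _).symm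
    _ = fderiv ℝ (Function.uncurry (dt f)) (x, t) (1, 0) := by rw [uncurry_dt hf]
    _ = dx (dt f) x t := (dx_eq_fderiv hf.dt x t).symm
end H1Aux

open H1Aux in
/-- `H1 = 2 z z_xx - z_x² + 4 (u-1) z²` with `z = 12tu + 2x + y` is a first
integral: it is constant on `ℝ × ℝ` for solutions of systems (Dx) and (Dt). -/
theorem H1_first_integral (u y : ℝ → ℝ → ℝ)
    (hu : ContDiff ℝ (⊤ : ℕ∞) (Function.uncurry u)) (hy : ContDiff ℝ (⊤ : ℕ∞) (Function.uncurry y))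
    (hDx : ∀ x t, DxEqAt u y x t) (hDt : ∀ x t, DtEqAt u y x t) :
    ∀ x t x' t', H1expr u y x t = H1expr u y x' t' := by
  have hu' : Sm u := hu
  have hy' : Sm y := hy
  set Z := zfun u y with hZdef
  have hz : Sm Z := by
    have h : Function.uncurry Z = fun p : ℝ × ℝ =>
        12 * p.2 * Function.uncurry u p + 2 * p.1 + Function.uncurry y p := rfl
    rw [Sm, h]
    exact (((contDiff_const.mul contDiff_snd).mul hu).add
      (contDiff_const.mul contDiff_fst)).add hy
  have hux : Sm (dx u) := hu'.dx
  have huxx : Sm (dx (dx u)) := hux.dx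
  have hyx : Sm (dx y) := hy'.dx
  have hyxx : Sm (dx (dx y)) := hyx.dx
  have hzx : Sm (dx Z) := hz.dx
  have hzxx : Sm (dx (dx Z)) := hzx.dx
  -- B1 : first x-derivative of Z
  have zx_eq : ∀ x t, dx Z x t = 12 * t * dx u x t + 2 + dx y x t := by
    intro x t
    have h2 : HasDerivAt (fun x' : ℝ => 2 * x') (2 : ℝ) x := by
      simpa using (hasDerivAt_id x).const_mul (2 : ℝ)
    exact ((((hu'.hx x t).const_mul (12 * t)).add h2).add (hy'.hx x t)).deriv
  -- B2/B3 : second x-derivative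
  have zxF : dx Z = fun x t => 12 * t * dx u x t + 2 + dx y x t := by
    funext x t; exact zx_eq x t
  have zxx_eq : ∀ x t, dx (dx Z) x t
      = 12 * t * dx (dx u) x t + 0 + dx (dx y) x t := by
    intro x t
    rw [zxF]
    exact ((((hux.hx x t).const_mul (12 * t)).add (hasDerivAt_const x (2 : ℝ))).add
      (hyx.hx x t)).deriv
  have zxxF : dx (dx Z) = fun x t => 12 * t * dx (dx u) x t + 0 + dx (dx y) x t := by
    funext x t; exact zxx_eq x t
  have zxxx_eq : ∀ x t, dx (dx (dx Z)) x t
      = 12 * t * dx (dx (dx u)) x t + 0 + dx (dx (dx y)) x t := by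
    intro x t
    rw [zxxF]
    exact ((((huxx.hx x t).const_mul (12 * t)).add (hasDerivAt_const x (0 : ℝ))).add
      (hyxx.hx x t)).deriv
  -- B5 : t-derivative of Z
  have zt_eq : ∀ x t, dt Z x t
      = 12 * 1 * u x t + 12 * t * dt u x t + 0 + dt y x t := by
    intro x t
    exact ((((((hasDerivAt_id t).const_mul (12 : ℝ))).mul (hu'.ht x t)).add
      (hasDerivAt_const t (2 * x))).add (hy'.ht x t)).deriv
  -- C1 : z_xxx + 4(u-1) z_x + 2 u_x z = 0
  have R1 : ∀ x t, dx (dx (dx Z)) x t + 4 * (u x t - 1) * dx Z x t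
      + 2 * dx u x t * Z x t = 0 := by
    intro x t
    obtain ⟨e1, e2⟩ := hDx x t
    rw [zxxx_eq, zx_eq, hZdef]
    simp only [zfun]
    linear_combination 4 * e1 + e2
  -- C2 : z_t = (2u+4) z_x - 2 u_x z
  have R2 : ∀ x t, dt Z x t
      = (2 * u x t + 4) * dx Z x t - 2 * dx u x t * Z x t := by
    intro x t
    obtain ⟨e1, _⟩ := hDx x t
    obtain ⟨d1, d2⟩ := hDt x t
    rw [zt_eq, zx_eq, hZdef]
    simp only [zfun]
    linear_combination 12 * t * d1 + d2 + 4 * e1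
  -- G and its x-derivative
  set G : ℝ → ℝ → ℝ := fun a b => (2 * u a b + 4) * dx Z a b - 2 * dx u a b * Z a b
    with hGdef
  have ztF : dt Z = G := by funext x t; exact R2 x t
  have gx_eq : ∀ x t, dx G x t
      = 2 * dx u x t * dx Z x t + (2 * u x t + 4) * dx (dx Z) x t
        - (2 * dx (dx u) x t * Z x t + 2 * dx u x t * dx Z x t) := by
    intro x t
    exact (((((hu'.hx x t).const_mul 2).add_const 4).mul (hzx.hx x t)).sub
      (((hux.hx x t).const_mul 2).mul (hz.hx x t))).deriv
  set Hf : ℝ → ℝ → ℝ := fun a b =>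
      2 * dx u a b * dx Z a b + (2 * u a b + 4) * dx (dx Z) a b
        - (2 * dx (dx u) a b * Z a b + 2 * dx u a b * dx Z a b) with hHdef
  have gxF : dx G = Hf := by funext x t; exact gx_eq x t
  have hx_eq : ∀ x t, dx Hf x t
      = (2 * dx (dx u) x t * dx Z x t + 2 * dx u x t * dx (dx Z) x t
          + (2 * dx u x t * dx (dx Z) x t + (2 * u x t + 4) * dx (dx (dx Z)) x t))
        - ((2 * dx (dx (dx u)) x t * Z x t + 2 * dx (dx u) x t * dx Z x t)
          + (2 * dx (dx u) x t * dx Z x t + 2 * dx u x t * dx (dx Z) x t)) := by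
    intro x t
    exact (((((hux.hx x t).const_mul 2).mul (hzx.hx x t)).add
        ((((hu'.hx x t).const_mul 2).add_const 4).mul (hzxx.hx x t))).sub
      (((((huxx.hx x t).const_mul 2).mul (hz.hx x t)).add
        (((hux.hx x t).const_mul 2).mul (hzx.hx x t))))).deriv
  -- mixed derivatives via Clairaut
  have R3 : ∀ x t, dt (dx Z) x t
      = 2 * dx u x t * dx Z x t + (2 * u x t + 4) * dx (dx Z) x t
        - (2 * dx (dx u) x t * Z x t + 2 * dx u x t * dx Z x t) := by
    intro x t
    rw [swap_dt_dx hz, ztF]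
    exact gx_eq x t
  have dtdxF : dt (dx Z) = Hf := by
    funext x t; rw [R3 x t, hHdef]
  have R4 : ∀ x t, dt (dx (dx Z)) x t
      = (2 * dx (dx u) x t * dx Z x t + 2 * dx u x t * dx (dx Z) x t
          + (2 * dx u x t * dx (dx Z) x t + (2 * u x t + 4) * dx (dx (dx Z)) x t))
        - ((2 * dx (dx (dx u)) x t * Z x t + 2 * dx (dx u) x t * dx Z x t)
          + (2 * dx (dx u) x t * dx Z x t + 2 * dx u x t * dx (dx Z) x t)) := by
    intro x t
    rw [swap_dt_dx hzx, dtdxF]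
    exact hx_eq x t
  -- x-derivative of H1 is zero
  have hH1x : ∀ x t, HasDerivAt (fun x' => H1expr u y x' t) 0 x := by
    intro x t
    have h : HasDerivAt (fun x' => H1expr u y x' t)
        ((2 * dx Z x t * dx (dx Z) x t + 2 * Z x t * dx (dx (dx Z)) x t
          - (2 : ℕ) * dx Z x t ^ (2 - 1) * dx (dx Z) x t)
         + (4 * dx u x t * Z x t ^ 2
            + 4 * (u x t - 1) * ((2 : ℕ) * Z x t ^ (2 - 1) * dx Z x t))) x := by
      exact ((((hz.hx x t).const_mul 2).mul (hzxx.hx x t)).sub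
          ((hzx.hx x t).pow 2)).add
        ((((hu'.hx x t).sub_const 1).const_mul 4).mul ((hz.hx x t).pow 2))
    have hval : (2 * dx Z x t * dx (dx Z) x t + 2 * Z x t * dx (dx (dx Z)) x t
          - (2 : ℕ) * dx Z x t ^ (2 - 1) * dx (dx Z) x t)
         + (4 * dx u x t * Z x t ^ 2
            + 4 * (u x t - 1) * ((2 : ℕ) * Z x t ^ (2 - 1) * dx Z x t)) = 0 := by
      have h1 := R1 x t
      push_cast
      norm_num
      linear_combination 2 * Z x t * h1
    rwa [hval] at h
  -- t-derivative of H1 is zero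
  have hH1t : ∀ x t, HasDerivAt (fun t' => H1expr u y x t') 0 t := by
    intro x t
    have h : HasDerivAt (fun t' => H1expr u y x t')
        ((2 * dt Z x t * dx (dx Z) x t + 2 * Z x t * dt (dx (dx Z)) x t
          - (2 : ℕ) * dx Z x t ^ (2 - 1) * dt (dx Z) x t)
         + (4 * dt u x t * Z x t ^ 2
            + 4 * (u x t - 1) * ((2 : ℕ) * Z x t ^ (2 - 1) * dt Z x t))) t := by
      exact ((((hz.ht x t).const_mul 2).mul (hzxx.ht x t)).sub
          ((hzx.ht x t).pow 2)).add
        ((((hu'.ht x t).sub_const 1).const_mul 4).mul ((hz.ht x t).pow 2))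
    have hval : (2 * dt Z x t * dx (dx Z) x t + 2 * Z x t * dt (dx (dx Z)) x t
          - (2 : ℕ) * dx Z x t ^ (2 - 1) * dt (dx Z) x t)
         + (4 * dt u x t * Z x t ^ 2
            + 4 * (u x t - 1) * ((2 : ℕ) * Z x t ^ (2 - 1) * dt Z x t)) = 0 := by
      have h1 := R1 x t
      have h2 := R2 x t
      have h3 := R3 x t
      have h4 := R4 x t
      have hk := (hDt x t).1
      push_cast
      norm_num
      linear_combination 2 * dx (dx Z) x t * h2 + 2 * Z x t * h4 - 2 * dx Z x t * h3
        + 4 * (Z x t) ^ 2 * hk + 8 * (u x t - 1) * Z x t * h2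
        + 2 * Z x t * (2 * u x t + 4) * h1
    rwa [hval] at h
  intro x t x' t'
  have c1 : H1expr u y x t = H1expr u y x' t :=
    is_const_of_deriv_eq_zero (fun a => (hH1x a t).differentiableAt)
      (fun a => (hH1x a t).deriv) x x'
  have c2 : H1expr u y x' t = H1expr u y x' t' :=
    is_const_of_deriv_eq_zero (fun b => (hH1t x' b).differentiableAt)
      (fun b => (hH1t x' b).deriv) t t'
  exact c1.trans c2
end

section
/- Soliton solution: Let a ∈ ℝ and set X = x + 4t + a, u(x,t) = 2/cosh²(X), y(x,t) = 2(1 − x·tanh X)·tanh X. Then (u,y) satisfies both equations of system (Dx) and both equations of system (Dt) on ℝ × ℝ, and the first integrals take the values H0 = 2y y_xx − y_x² + 4u y² = −4 and H1 = 2z z_xx − z_x² + 4(u−1)z² = −16, where z = 12tu + 2x + y. -/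
/-!
With `X = x + 4t + a`, the function `u` is `φ(X)` for the profile `φ = 2 / cosh²`, which satisfies
`φ' = -2 φ tanh` and `φ'' = 4 φ - 3 φ²`, hence the travelling-wave reduction `φ''' + 6 φ φ' = 4 φ'`
of KdV; this gives the equations for `u` in (Dx) and (Dt). Since `φ = 2 (1 - tanh²)`, both
`y = 2 tanh X + x (φ(X) - 2)` and `z = 2 tanh X + (x + 12 t) φ(X)` are of the form
`2 tanh X + (x + α t) φ(X) + β x`, whose partial derivatives are again linear in `x` with
coefficients in `φ`, `tanh` and the derivatives of `φ`. The remaining identities are then polynomial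
identities in `x`, `t` and `tanh X`.
-/

open Real

theorem Real.hasDerivAt_tanh (w : ℝ) : HasDerivAt tanh (1 - tanh w ^ 2) w := by
  have h := (hasDerivAt_sinh w).div (hasDerivAt_cosh w) (cosh_pos w).ne'
  rw [show sinh / cosh = tanh from funext fun v => (tanh_eq_sinh_div_cosh v).symm] at h
  refine h.congr_deriv ?_
  have hc := (cosh_pos w).ne'
  rw [tanh_eq_sinh_div_cosh]
  field_simp

noncomputable def soliton (w : ℝ) : ℝ := 2 / cosh w ^ 2

theorem soliton_eq_tanh (w : ℝ) : soliton w = 2 * (1 - tanh w ^ 2) := by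
  have hc := (cosh_pos w).ne'
  rw [soliton, tanh_eq_sinh_div_cosh]
  field_simp
  linarith [cosh_sq w]

theorem hasDerivAt_soliton (w : ℝ) : HasDerivAt soliton (-2 * soliton w * tanh w) w := by
  rw [show soliton = fun v => 2 * (1 - tanh v ^ 2) from funext soliton_eq_tanh]
  refine ((((hasDerivAt_tanh w).pow 2).const_sub 1).const_mul 2).congr_deriv ?_
  ring

theorem deriv_soliton (w : ℝ) : deriv soliton w = -2 * soliton w * tanh w :=
  (hasDerivAt_soliton w).deriv

theorem hasDerivAt_deriv_soliton (w : ℝ) :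
    HasDerivAt (deriv soliton) (4 * soliton w - 3 * soliton w ^ 2) w := by
  rw [show deriv soliton = fun v => -2 * soliton v * tanh v from funext deriv_soliton]
  refine (((hasDerivAt_soliton w).const_mul (-2)).mul (hasDerivAt_tanh w)).congr_deriv ?_
  rw [soliton_eq_tanh]
  ring

theorem deriv_deriv_soliton (w : ℝ) :
    deriv (deriv soliton) w = 4 * soliton w - 3 * soliton w ^ 2 :=
  (hasDerivAt_deriv_soliton w).deriv

theorem hasDerivAt_deriv_deriv_soliton (w : ℝ) :
    HasDerivAt (deriv (deriv soliton)) ((4 - 6 * soliton w) * deriv soliton w) w := by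
  rw [show deriv (deriv soliton) = fun v => 4 * soliton v - 3 * soliton v ^ 2
    from funext deriv_deriv_soliton]
  refine (((hasDerivAt_soliton w).const_mul 4).sub
    (((hasDerivAt_soliton w).pow 2).const_mul 3)).congr_deriv ?_
  rw [deriv_soliton]
  ring

theorem deriv_deriv_deriv_soliton (w : ℝ) :
    deriv (deriv (deriv soliton)) w = (4 - 6 * soliton w) * deriv soliton w :=
  (hasDerivAt_deriv_deriv_soliton w).deriv

theorem soliton_ode (w : ℝ) :
    deriv (deriv (deriv soliton)) w + 6 * soliton w * deriv soliton w = 4 * deriv soliton w := by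
  rw [deriv_deriv_deriv_soliton]
  ring

theorem dx_eq_of_hasDerivAt {f f' : ℝ → ℝ → ℝ}
    (h : ∀ x t, HasDerivAt (fun x => f x t) (f' x t) x) : dx f = f' :=
  funext₂ fun x t => (h x t).deriv

theorem dt_eq_of_hasDerivAt {f f' : ℝ → ℝ → ℝ}
    (h : ∀ x t, HasDerivAt (fun t => f x t) (f' x t) t) : dt f = f' :=
  funext₂ fun x t => (h x t).deriv

section TravelingWave

variable {f : ℝ → ℝ} {f' c a x t : ℝ}

theorem dx_comp_wave :
    dx (fun x t => f (x + c * t + a)) = fun x t => deriv f (x + c * t + a) := by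
  funext x t
  simp only [dx, add_assoc]
  exact deriv_comp_add_const ..

theorem dt_comp_wave :
    dt (fun x t => f (x + c * t + a)) = fun x t => c * deriv f (x + c * t + a) := by
  funext x t
  have h := deriv_comp_mul_left c (fun s => f (s + (x + a))) t
  simp only [smul_eq_mul, deriv_comp_add_const] at h
  simpa only [dt, show ∀ s, x + c * s + a = c * s + (x + a) from fun s => by ring] using h

theorem HasDerivAt.comp_wave_x (hf : HasDerivAt f f' (x + c * t + a)) :
    HasDerivAt (fun x => f (x + c * t + a)) f' x := by
  rw [add_assoc] at hf
  simpa only [add_assoc] using hf.comp_add_const x (c * t + a)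

theorem HasDerivAt.comp_wave_t (hf : HasDerivAt f f' (x + c * t + a)) :
    HasDerivAt (fun t => f (x + c * t + a)) (c * f') t := by
  have hX : HasDerivAt (fun t => x + c * t + a) c t := by
    simpa using ((hasDerivAt_id t).const_mul c).const_add x |>.add_const a
  rw [mul_comm]
  exact hf.comp t hX

end TravelingWave

section Soliton

variable (a α β : ℝ)

/-- `y = yFamily a 0 (-2)` and `z = 12 t u + 2 x + y = yFamily a 12 0`. -/
noncomputable def yFamily : ℝ → ℝ → ℝ := fun x t =>
  2 * tanh (x + 4 * t + a) + (x + α * t) * soliton (x + 4 * t + a) + β * x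

theorem dx_yFamily : dx (yFamily a α β) = fun x t =>
    2 * soliton (x + 4 * t + a) + (x + α * t) * deriv soliton (x + 4 * t + a) + β := by
  refine dx_eq_of_hasDerivAt fun x t => ?_
  have hS := (hasDerivAt_soliton (x + 4 * t + a)).differentiableAt.hasDerivAt.comp_wave_x
  have h := ((((hasDerivAt_tanh (x + 4 * t + a)).comp_wave_x).const_mul 2).add
    (((hasDerivAt_id x).add_const (α * t)).mul hS)).add ((hasDerivAt_id x).const_mul β)
  refine h.congr_deriv ?_
  rw [soliton_eq_tanh]
  simp only [id]
  ring

theorem dx_dx_yFamily : dx (dx (yFamily a α β)) = fun x t =>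
    3 * deriv soliton (x + 4 * t + a) + (x + α * t) * deriv (deriv soliton) (x + 4 * t + a) := by
  rw [dx_yFamily]
  refine dx_eq_of_hasDerivAt fun x t => ?_
  have hS := (hasDerivAt_soliton (x + 4 * t + a)).differentiableAt.hasDerivAt.comp_wave_x
  have hS' := (hasDerivAt_deriv_soliton (x + 4 * t + a)).differentiableAt.hasDerivAt.comp_wave_x
  have h := ((hS.const_mul 2).add (((hasDerivAt_id x).add_const (α * t)).mul hS')).add_const β
  refine h.congr_deriv ?_
  simp only [id]
  ring

theorem dx_dx_dx_yFamily : dx (dx (dx (yFamily a α β))) = fun x t =>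
    4 * deriv (deriv soliton) (x + 4 * t + a)
      + (x + α * t) * deriv (deriv (deriv soliton)) (x + 4 * t + a) := by
  rw [dx_dx_yFamily]
  refine dx_eq_of_hasDerivAt fun x t => ?_
  have hS' := (hasDerivAt_deriv_soliton (x + 4 * t + a)).differentiableAt.hasDerivAt.comp_wave_x
  have hS'' :=
    (hasDerivAt_deriv_deriv_soliton (x + 4 * t + a)).differentiableAt.hasDerivAt.comp_wave_x
  have h := (hS'.const_mul 3).add (((hasDerivAt_id x).add_const (α * t)).mul hS'')
  refine h.congr_deriv ?_
  simp only [id]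
  ring

theorem dt_yFamily : dt (yFamily a α β) = fun x t =>
    (4 + α) * soliton (x + 4 * t + a) + 4 * (x + α * t) * deriv soliton (x + 4 * t + a) := by
  refine dt_eq_of_hasDerivAt fun x t => ?_
  have hS := (hasDerivAt_soliton (x + 4 * t + a)).differentiableAt.hasDerivAt.comp_wave_t
  have h := ((((hasDerivAt_tanh (x + 4 * t + a)).comp_wave_t).const_mul 2).add
    ((((hasDerivAt_id t).const_mul α).const_add x).mul hS)).add_const (β * x)
  refine h.congr_deriv ?_
  rw [soliton_eq_tanh]
  simp only [id]
  ring

theorem yFamily_zero_neg_two : yFamily a 0 (-2) = fun x t =>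
    2 * (1 - x * tanh (x + 4 * t + a)) * tanh (x + 4 * t + a) := by
  funext x t
  rw [yFamily, soliton_eq_tanh]
  ring

theorem zfun_soliton_yFamily :
    zfun (fun x t => soliton (x + 4 * t + a)) (yFamily a 0 (-2)) = yFamily a 12 0 := by
  funext x t
  simp only [zfun, yFamily]
  ring

variable (x t : ℝ)

theorem dxEqAt_soliton :
    DxEqAt (fun x t => soliton (x + 4 * t + a)) (yFamily a 0 (-2)) x t := by
  rw [DxEqAt, dx_dx_dx_yFamily, dx_yFamily]
  simp only [dx_comp_wave]
  constructor
  · linear_combination 3 * t * soliton_ode (x + 4 * t + a)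
  · simp only [yFamily, deriv_deriv_deriv_soliton, deriv_deriv_soliton, deriv_soliton,
      soliton_eq_tanh]
    ring

theorem dtEqAt_soliton :
    DtEqAt (fun x t => soliton (x + 4 * t + a)) (yFamily a 0 (-2)) x t := by
  rw [DtEqAt, dt_yFamily, dx_yFamily, dt_comp_wave]
  simp only [dx_comp_wave]
  constructor
  · linear_combination -soliton_ode (x + 4 * t + a)
  · simp only [yFamily, deriv_soliton, soliton_eq_tanh]
    ring

theorem H0expr_soliton :
    H0expr (fun x t => soliton (x + 4 * t + a)) (yFamily a 0 (-2)) x t = -4 := by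
  rw [H0expr, dx_dx_yFamily, dx_yFamily]
  simp only [yFamily, deriv_deriv_soliton, deriv_soliton, soliton_eq_tanh]
  ring

theorem H1expr_soliton :
    H1expr (fun x t => soliton (x + 4 * t + a)) (yFamily a 0 (-2)) x t = -16 := by
  rw [H1expr, zfun_soliton_yFamily, dx_dx_yFamily, dx_yFamily]
  simp only [yFamily, deriv_deriv_soliton, deriv_soliton, soliton_eq_tanh]
  ring

end Soliton

/-- The soliton solution `u = 2/cosh²X`, `y = 2(1 - x tanh X) tanh X` with
`X = x + 4t + a` solves systems (Dx), (Dt), with `H0 = -4` and `H1 = -16`. -/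
theorem soliton_solution (a : ℝ) :
    ∀ x t,
      DxEqAt (fun x t => 2 / (Real.cosh (x + 4 * t + a)) ^ 2)
        (fun x t => 2 * (1 - x * Real.tanh (x + 4 * t + a)) * Real.tanh (x + 4 * t + a)) x t ∧
      DtEqAt (fun x t => 2 / (Real.cosh (x + 4 * t + a)) ^ 2)
        (fun x t => 2 * (1 - x * Real.tanh (x + 4 * t + a)) * Real.tanh (x + 4 * t + a)) x t ∧
      H0expr (fun x t => 2 / (Real.cosh (x + 4 * t + a)) ^ 2)
        (fun x t => 2 * (1 - x * Real.tanh (x + 4 * t + a)) * Real.tanh (x + 4 * t + a)) x t = -4 ∧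
      H1expr (fun x t => 2 / (Real.cosh (x + 4 * t + a)) ^ 2)
        (fun x t => 2 * (1 - x * Real.tanh (x + 4 * t + a)) * Real.tanh (x + 4 * t + a)) x t = -16 := by
  intro x t
  rw [← yFamily_zero_neg_two]
  exact ⟨dxEqAt_soliton a x t, dtEqAt_soliton a x t, H0expr_soliton a x t, H1expr_soliton a x t⟩
end

section
/- Trigonometric solution: Let a ∈ ℝ and set X = x + 2t + a. On the open set where cos X ≠ 0, define u(x,t) = 1 − 2/cos²(X) and y(x,t) = (2(6t − x) − sin(2X))/cos²(X). Then (u,y) satisfies both equations of system (Dx) and both equations of system (Dt), and the first integrals take the values H0 = 2y y_xx − y_x² + 4u y² = −16 and H1 = 2z z_xx − z_x² + 4(u−1)z² = −4, where z = 12tu + 2x + y. -/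
open Polynomial Real Set

noncomputable def tanDeriv (p : ℝ[X]) : ℝ[X] := (1 + X ^ 2) * derivative p

theorem hasDerivAt_eval_tan (p : ℝ[X]) {θ : ℝ} (h : cos θ ≠ 0) :
    HasDerivAt (fun θ => p.eval (tan θ)) ((tanDeriv p).eval (tan θ)) θ := by
  refine ((p.hasDerivAt (tan θ)).comp θ (hasDerivAt_tan h)).congr_deriv ?_
  rw [one_div, ← inv_one_add_tan_sq h, inv_inv, tanDeriv, eval_mul, mul_comm]
  simp

noncomputable def tanAffine (p q : ℝ[X]) (φ : ℝ → ℝ) (s : ℝ) : ℝ :=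
  p.eval (tan (φ s)) + s * q.eval (tan (φ s))

section
variable {p q : ℝ[X]} {φ : ℝ → ℝ} {c : ℝ}

theorem hasDerivAt_tanAffine {s : ℝ} (hφ : HasDerivAt φ c s) (h : cos (φ s) ≠ 0) :
    HasDerivAt (tanAffine p q φ)
      (tanAffine (q + C c * tanDeriv p) (C c * tanDeriv q) φ s) s := by
  have hp := (hasDerivAt_eval_tan p h).comp s hφ
  have hq := (hasDerivAt_eval_tan q h).comp s hφ
  refine (hp.add ((hasDerivAt_id s).mul hq)).congr_deriv ?_
  simp only [tanAffine, eval_add, eval_mul, eval_C, Function.comp_apply, id]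
  ring

theorem Set.EqOn.deriv_tanAffine {g : ℝ → ℝ} (hφ : ∀ s, HasDerivAt φ c s)
    (hg : EqOn g (tanAffine p q φ) {s | cos (φ s) ≠ 0}) :
    EqOn (_root_.deriv g) (tanAffine (q + C c * tanDeriv p) (C c * tanDeriv q) φ)
      {s | cos (φ s) ≠ 0} := by
  have hopen : IsOpen {s | cos (φ s) ≠ 0} :=
    isOpen_ne_fun (continuous_cos.comp (continuous_iff_continuousAt.2
      fun s => (hφ s).continuousAt)) continuous_const
  intro s hs
  rw [hg.deriv hopen hs]
  exact (hasDerivAt_tanAffine (hφ s) hs).deriv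
end

section
variable {p q : ℝ[X]} {f : ℝ → ℝ → ℝ} {a : ℝ}

theorem Set.EqOn.dx_tanAffine {t : ℝ}
    (hf : EqOn (fun x => f x t) (tanAffine p q (· + 2 * t + a)) {x | cos (x + 2 * t + a) ≠ 0}) :
    EqOn (fun x => dx f x t) (tanAffine (q + C 1 * tanDeriv p) (C 1 * tanDeriv q) (· + 2 * t + a))
      {x | cos (x + 2 * t + a) ≠ 0} :=
  hf.deriv_tanAffine fun s => ((hasDerivAt_id s).add_const _).add_const _

theorem Set.EqOn.dt_tanAffine {x : ℝ}
    (hf : EqOn (fun t => f x t) (tanAffine p q (x + 2 * · + a)) {t | cos (x + 2 * t + a) ≠ 0}) :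
    EqOn (fun t => dt f x t) (tanAffine (q + C 2 * tanDeriv p) (C 2 * tanDeriv q) (x + 2 * · + a))
      {t | cos (x + 2 * t + a) ≠ 0} :=
  hf.deriv_tanAffine fun s => by
    simpa using (((hasDerivAt_id s).const_mul 2).const_add x).add_const a
end

theorem Real.div_cos_sq {θ : ℝ} (h : cos θ ≠ 0) (r : ℝ) : r / cos θ ^ 2 = r * (1 + tan θ ^ 2) := by
  rw [div_eq_mul_inv, ← inv_one_add_tan_sq h, inv_inv]

theorem Real.sin_two_mul_div_cos_sq {θ : ℝ} (h : cos θ ≠ 0) :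
    sin (2 * θ) / cos θ ^ 2 = 2 * tan θ := by
  rw [sin_two_mul, tan_eq_sin_div_cos]
  field_simp

noncomputable def trigU (a : ℝ) : ℝ → ℝ → ℝ := fun x t => 1 - 2 / cos (x + 2 * t + a) ^ 2

noncomputable def trigY (a : ℝ) : ℝ → ℝ → ℝ := fun x t =>
  (2 * (6 * t - x) - sin (2 * (x + 2 * t + a))) / cos (x + 2 * t + a) ^ 2

section
variable {a x t : ℝ}

theorem trigU_eq (h : cos (x + 2 * t + a) ≠ 0) :
    trigU a x t = -1 - 2 * tan (x + 2 * t + a) ^ 2 := by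
  rw [trigU, div_cos_sq h]
  ring

theorem trigY_eq (h : cos (x + 2 * t + a) ≠ 0) :
    trigY a x t = (12 * t - 2 * x) * (1 + tan (x + 2 * t + a) ^ 2) - 2 * tan (x + 2 * t + a) := by
  rw [trigY, sub_div, div_cos_sq h, sin_two_mul_div_cos_sq h]
  ring
end

section
variable (a : ℝ)

theorem trigU_eqOn_x (t : ℝ) :
    EqOn (fun x => trigU a x t) (tanAffine (-1 - 2 * X ^ 2) 0 (· + 2 * t + a))
      {x | cos (x + 2 * t + a) ≠ 0} := fun x hx => by
  simp only [trigU_eq hx, tanAffine, eval_sub, eval_neg, eval_one, eval_mul, eval_ofNat,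
    eval_pow, eval_X, eval_zero, mul_zero, add_zero]

theorem trigU_eqOn_t (x : ℝ) :
    EqOn (fun t => trigU a x t) (tanAffine (-1 - 2 * X ^ 2) 0 (x + 2 * · + a))
      {t | cos (x + 2 * t + a) ≠ 0} := fun t ht => by
  simp only [trigU_eq ht, tanAffine, eval_sub, eval_neg, eval_one, eval_mul, eval_ofNat,
    eval_pow, eval_X, eval_zero, mul_zero, add_zero]

theorem trigY_eqOn_x (t : ℝ) :
    EqOn (fun x => trigY a x t)
      (tanAffine (C (12 * t) * (1 + X ^ 2) - 2 * X) (-2 * (1 + X ^ 2)) (· + 2 * t + a))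
      {x | cos (x + 2 * t + a) ≠ 0} := fun x hx => by
  simp only [trigY_eq hx, tanAffine, eval_add, eval_sub, eval_mul, eval_neg, eval_C, eval_X,
    eval_pow, eval_one, eval_ofNat]
  ring

theorem trigY_eqOn_t (x : ℝ) :
    EqOn (fun t => trigY a x t)
      (tanAffine (C (-2 * x) * (1 + X ^ 2) - 2 * X) (12 * (1 + X ^ 2)) (x + 2 * · + a))
      {t | cos (x + 2 * t + a) ≠ 0} := fun t ht => by
  simp only [trigY_eq ht, tanAffine, eval_add, eval_sub, eval_mul, eval_C, eval_X, eval_pow,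
    eval_one, eval_ofNat]
  ring

theorem trigZ_eqOn_x (t : ℝ) :
    EqOn (fun x => zfun (trigU a) (trigY a) x t)
      (tanAffine (C (-12 * t) * X ^ 2 - 2 * X) (-2 * X ^ 2) (· + 2 * t + a))
      {x | cos (x + 2 * t + a) ≠ 0} := fun x hx => by
  simp only [zfun, trigU_eq hx, trigY_eq hx, tanAffine, eval_sub, eval_mul, eval_neg, eval_C,
    eval_X, eval_pow, eval_ofNat]
  ring
end

/-- The trigonometric solution `u = 1 - 2/cos²X`, `y = (2(6t - x) - sin 2X)/cos²X`
with `X = x + 2t + a`, on the set where `cos X ≠ 0`, solves systems (Dx), (Dt),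
with `H0 = -16` and `H1 = -4`. -/
theorem trigonometric_solution (a : ℝ) :
    ∀ x t, Real.cos (x + 2 * t + a) ≠ 0 →
      DxEqAt (fun x t => 1 - 2 / (Real.cos (x + 2 * t + a)) ^ 2)
        (fun x t => (2 * (6 * t - x) - Real.sin (2 * (x + 2 * t + a)))
          / (Real.cos (x + 2 * t + a)) ^ 2) x t ∧
      DtEqAt (fun x t => 1 - 2 / (Real.cos (x + 2 * t + a)) ^ 2)
        (fun x t => (2 * (6 * t - x) - Real.sin (2 * (x + 2 * t + a)))
          / (Real.cos (x + 2 * t + a)) ^ 2) x t ∧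
      H0expr (fun x t => 1 - 2 / (Real.cos (x + 2 * t + a)) ^ 2)
        (fun x t => (2 * (6 * t - x) - Real.sin (2 * (x + 2 * t + a)))
          / (Real.cos (x + 2 * t + a)) ^ 2) x t = -16 ∧
      H1expr (fun x t => 1 - 2 / (Real.cos (x + 2 * t + a)) ^ 2)
        (fun x t => (2 * (6 * t - x) - Real.sin (2 * (x + 2 * t + a)))
          / (Real.cos (x + 2 * t + a)) ^ 2) x t = -4 := by
  intro x t hc
  change DxEqAt (trigU a) (trigY a) x t ∧ DtEqAt (trigU a) (trigY a) x t ∧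
    H0expr (trigU a) (trigY a) x t = -16 ∧ H1expr (trigU a) (trigY a) x t = -4
  have u1 := (trigU_eqOn_x a t).dx_tanAffine
  have u3 := u1.dx_tanAffine.dx_tanAffine
  have y1 := (trigY_eqOn_x a t).dx_tanAffine
  have y2 := y1.dx_tanAffine
  have y3 := y2.dx_tanAffine
  have z1 := (trigZ_eqOn_x a t).dx_tanAffine
  have z2 := z1.dx_tanAffine
  have uT := (trigU_eqOn_t a x).dt_tanAffine
  have yT := (trigY_eqOn_t a x).dt_tanAffine
  simp only [DxEqAt, DtEqAt, H0expr, H1expr, u1 hc, u3 hc, y1 hc, y2 hc, y3 hc, z1 hc, z2 hc,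
    uT hc, yT hc, trigU_eqOn_x a t hc, trigY_eqOn_x a t hc, trigZ_eqOn_x a t hc]
  simp only [tanAffine, tanDeriv, derivative_add, derivative_sub, derivative_mul, derivative_neg,
    derivative_C, derivative_X, derivative_X_sq, derivative_one, derivative_zero, derivative_ofNat,
    eval_add, eval_sub, eval_mul, eval_neg, eval_C, eval_X, eval_pow, eval_one, eval_zero,
    eval_ofNat]
  exact ⟨⟨by ring, by ring⟩, ⟨by ring, by ring⟩, by ring, by ring⟩
end

section
/- Rational solution with a pole at x = −a: Let a ∈ ℝ. On the open set where x + a ≠ 0, define u(x,t) = −2/(x+a)² and y(x,t) = 2(12t + a)/(x+a)² − 2(x+a). Then (u,y) satisfies both equations of system (Dx) and both equations of system (Dt), and the first integrals take the values H0 = 2y y_xx − y_x² + 4u y² = −36 and H1 = 2z z_xx − z_x² + 4(u−1)z² = −16a², where z = 12tu + 2x + y. -/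
/-!
Off the pole, `u`, `y` and `z = 12 t u + 2 x + y` are all of the form `c / (x + a) ^ n + d x + e`
with `c, d, e` depending only on `t` (for `z` the time dependence even cancels:
`z = 2a/(x+a)² - 2a`), and this form is preserved by `∂ₓ`. So every derivative occurring in the two systems and the two
first integrals is explicit, and each claim becomes an identity of rational functions of `x + a`.
-/

open Filter Topology

theorem hasDerivAt_const_div_add_pow {a c x : ℝ} (n : ℕ) (hx : x + a ≠ 0) :
    HasDerivAt (fun x' => c / (x' + a) ^ n) (-(n * c) / (x + a) ^ (n + 1)) x := by
  have hpow : HasDerivAt (fun x' => (x' + a) ^ n) (n * (x + a) ^ (n - 1)) x := by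
    simpa using ((hasDerivAt_id x).add_const a).fun_pow n
  refine ((hasDerivAt_const x c).fun_div hpow (pow_ne_zero n hx)).congr_deriv ?_
  rcases n with _ | n
  · simp
  · rw [Nat.add_sub_cancel]
    field_simp
    ring

theorem dx_eq_of_eq_div_pow_add {f : ℝ → ℝ → ℝ} {a c d e t x : ℝ} {n : ℕ}
    (hf : ∀ x', x' + a ≠ 0 → f x' t = c / (x' + a) ^ n + d * x' + e) (hx : x + a ≠ 0) :
    dx f x t = -(n * c) / (x + a) ^ (n + 1) + d := by
  have hderiv : HasDerivAt (fun x' => c / (x' + a) ^ n + d * x' + e)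
      (-(n * c) / (x + a) ^ (n + 1) + d) x := by
    simpa using
      ((hasDerivAt_const_div_add_pow n hx).add ((hasDerivAt_id x).const_mul d)).add_const e
  have hopen : IsOpen {x' : ℝ | x' + a ≠ 0} :=
    isOpen_ne_fun (continuous_add_const a) continuous_const
  have heq : (fun x' => f x' t) =ᶠ[𝓝 x] fun x' => c / (x' + a) ^ n + d * x' + e := by
    filter_upwards [hopen.mem_nhds hx] with x' hx' using hf x' hx'
  exact heq.deriv_eq.trans hderiv.deriv

namespace RationalSolution

noncomputable def u (a : ℝ) : ℝ → ℝ → ℝ := fun x _ => -2 / (x + a) ^ 2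

noncomputable def y (a : ℝ) : ℝ → ℝ → ℝ :=
  fun x t => 2 * (12 * t + a) / (x + a) ^ 2 - 2 * (x + a)

variable {a x : ℝ} (t : ℝ)

theorem dx_u (hx : x + a ≠ 0) : dx (u a) x t = 4 / (x + a) ^ 3 := by
  rw [dx_eq_of_eq_div_pow_add (c := -2) (n := 2) (d := 0) (e := 0) (fun x' _ => by simp [u]) hx]
  norm_num

theorem dx_dx_u (hx : x + a ≠ 0) : dx (dx (u a)) x t = -12 / (x + a) ^ 4 := by
  rw [dx_eq_of_eq_div_pow_add (c := 4) (n := 3) (d := 0) (e := 0)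
    (fun x' hx' => by rw [dx_u t hx']; ring) hx]
  norm_num

theorem dx_dx_dx_u (hx : x + a ≠ 0) : dx (dx (dx (u a))) x t = 48 / (x + a) ^ 5 := by
  rw [dx_eq_of_eq_div_pow_add (c := -12) (n := 4) (d := 0) (e := 0)
    (fun x' hx' => by rw [dx_dx_u t hx']; ring) hx]
  norm_num

theorem dx_y (hx : x + a ≠ 0) : dx (y a) x t = -4 * (12 * t + a) / (x + a) ^ 3 - 2 := by
  rw [dx_eq_of_eq_div_pow_add (c := 2 * (12 * t + a)) (n := 2) (d := -2) (e := -2 * a)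
    (fun x' _ => by simp only [y]; ring) hx]
  push_cast
  ring

theorem dx_dx_y (hx : x + a ≠ 0) : dx (dx (y a)) x t = 12 * (12 * t + a) / (x + a) ^ 4 := by
  rw [dx_eq_of_eq_div_pow_add (c := -4 * (12 * t + a)) (n := 3) (d := 0) (e := -2)
    (fun x' hx' => by rw [dx_y t hx']; ring) hx]
  push_cast
  ring

theorem dx_dx_dx_y (hx : x + a ≠ 0) :
    dx (dx (dx (y a))) x t = -48 * (12 * t + a) / (x + a) ^ 5 := by
  rw [dx_eq_of_eq_div_pow_add (c := 12 * (12 * t + a)) (n := 4) (d := 0) (e := 0)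
    (fun x' hx' => by rw [dx_dx_y t hx']; ring) hx]
  push_cast
  ring

theorem dt_u : dt (u a) x t = 0 :=
  deriv_const t _

theorem dt_y : dt (y a) x t = 24 / (x + a) ^ 2 := by
  have hlin : HasDerivAt (fun t' => 2 * (12 * t' + a)) 24 t :=
    ((((hasDerivAt_id' t).const_mul 12).add_const a).const_mul 2).congr_deriv (by norm_num)
  exact ((hlin.div_const ((x + a) ^ 2)).sub_const (2 * (x + a))).deriv

theorem zfun_eq (hx : x + a ≠ 0) : zfun (u a) (y a) x t = 2 * a / (x + a) ^ 2 - 2 * a := by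
  simp only [zfun, u, y]
  field_simp
  ring

theorem dx_zfun (hx : x + a ≠ 0) : dx (zfun (u a) (y a)) x t = -4 * a / (x + a) ^ 3 := by
  rw [dx_eq_of_eq_div_pow_add (c := 2 * a) (n := 2) (d := 0) (e := -2 * a)
    (fun x' hx' => by rw [zfun_eq t hx']; ring) hx]
  push_cast
  ring

theorem dx_dx_zfun (hx : x + a ≠ 0) :
    dx (dx (zfun (u a) (y a))) x t = 12 * a / (x + a) ^ 4 := by
  rw [dx_eq_of_eq_div_pow_add (c := -4 * a) (n := 3) (d := 0) (e := 0)
    (fun x' hx' => by rw [dx_zfun t hx']; ring) hx]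
  push_cast
  ring

theorem dxEqAt (hx : x + a ≠ 0) : DxEqAt (u a) (y a) x t := by
  rw [DxEqAt, dx_u t hx, dx_dx_dx_u t hx, dx_y t hx, dx_dx_dx_y t hx]
  simp only [u, y]
  constructor <;> (field_simp; ring)

theorem dtEqAt (hx : x + a ≠ 0) : DtEqAt (u a) (y a) x t := by
  rw [DtEqAt, dt_u, dt_y, dx_u t hx, dx_dx_dx_u t hx, dx_y t hx]
  simp only [u, y]
  constructor <;> (field_simp; ring)

theorem h0expr_eq (hx : x + a ≠ 0) : H0expr (u a) (y a) x t = -36 := by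
  rw [H0expr, dx_y t hx, dx_dx_y t hx]
  simp only [u, y]
  field_simp
  ring

theorem h1expr_eq (hx : x + a ≠ 0) : H1expr (u a) (y a) x t = -16 * a ^ 2 := by
  rw [H1expr, zfun_eq t hx, dx_zfun t hx, dx_dx_zfun t hx]
  simp only [u]
  field_simp
  ring

end RationalSolution

open RationalSolution in
/-- The rational solution `u = -2/(x+a)²`, `y = 2(12t+a)/(x+a)² - 2(x+a)` on the
set `x + a ≠ 0` solves systems (Dx), (Dt), with `H0 = -36` and `H1 = -16a²`. -/
theorem rational_solution (a : ℝ) :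
    ∀ x t : ℝ, x + a ≠ 0 →
      DxEqAt (fun x _ => -2 / (x + a) ^ 2)
        (fun x t => 2 * (12 * t + a) / (x + a) ^ 2 - 2 * (x + a)) x t ∧
      DtEqAt (fun x _ => -2 / (x + a) ^ 2)
        (fun x t => 2 * (12 * t + a) / (x + a) ^ 2 - 2 * (x + a)) x t ∧
      H0expr (fun x _ => -2 / (x + a) ^ 2)
        (fun x t => 2 * (12 * t + a) / (x + a) ^ 2 - 2 * (x + a)) x t = -36 ∧
      H1expr (fun x _ => -2 / (x + a) ^ 2)
        (fun x t => 2 * (12 * t + a) / (x + a) ^ 2 - 2 * (x + a)) x t = -16 * a ^ 2 :=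
  fun _ t hx => ⟨dxEqAt t hx, dtEqAt t hx, h0expr_eq t hx, h1expr_eq t hx⟩
end

section
/- Rational solution over the background u = 1: Let a ∈ ℝ. On the open set where x + 6t + a ≠ 0, define u(x,t) = 1 − 2/(x + 6t + a)² and y(x,t) = 2a/(x + 6t + a)² + 2a. Then (u,y) satisfies both equations of system (Dx) and both equations of system (Dt), and the first integrals take the values H0 = 2y y_xx − y_x² + 4u y² = 16a² and H1 = 2z z_xx − z_x² + 4(u−1)z² = −36, where z = 12tu + 2x + y. -/
/-!
For fixed `t`, each of `u`, `y` and `z = 12 t u + 2 x + y` has the shape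
`e + m x + c / (x + 6 t + a) ^ n`, and away from the pole `x`-differentiation preserves this
shape, so all `x`-derivatives are explicit rational functions. Moreover `u` and `y` depend only
on `x + 6 t`, so their `t`-derivative is `6` times their `x`-derivative. Every identity then
becomes a rational identity in `s = x + 6 t + a ≠ 0`.
-/

open Filter Topology

theorem HasDerivAt.const_div_pow {w : ℝ → ℝ} {w' s : ℝ} (hw : HasDerivAt w w' s)
    (hs : w s ≠ 0) (c : ℝ) (n : ℕ) :
    HasDerivAt (fun s => c / w s ^ n) (-(n * c * w') / w s ^ (n + 1)) s := by
  have h := ((hw.fun_pow n).fun_inv (pow_ne_zero n hs)).const_mul c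
  simp only [← div_eq_mul_inv] at h
  refine h.congr_deriv ?_
  rcases n with _ | n
  · simp
  · simp only [Nat.cast_add, Nat.cast_one, Nat.add_sub_cancel]
    field_simp
    ring

theorem dt_comp_add_mul (F : ℝ → ℝ) (v x t : ℝ) :
    dt (fun x t => F (x + v * t)) x t = v * dx (fun x t => F (x + v * t)) x t := by
  simp only [dt, dx, deriv_comp_add_const]
  rw [deriv_comp_mul_left v (fun s => F (x + s)), smul_eq_mul, deriv_comp_const_add]

noncomputable def affineAddPole (q e m c : ℝ → ℝ) (n : ℕ) : ℝ → ℝ → ℝ :=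
  fun x t => e t + m t * x + c t / (x + q t) ^ n

def EqOffPole (q : ℝ → ℝ) (f g : ℝ → ℝ → ℝ) : Prop :=
  ∀ x t, x + q t ≠ 0 → f x t = g x t

section

variable {q e m c : ℝ → ℝ} {n : ℕ}

theorem hasDerivAt_affineAddPole {x t : ℝ} (hx : x + q t ≠ 0) :
    HasDerivAt (fun x' => affineAddPole q e m c n x' t)
      (affineAddPole q m 0 (fun t => -(n * c t)) (n + 1) x t) x := by
  have hpole : HasDerivAt (fun x' => x' + q t) 1 x := (hasDerivAt_id x).add_const (q t)
  refine ((((hasDerivAt_id x).const_mul (m t)).const_add (e t)).fun_add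
    (hpole.const_div_pow hx (c t) n)).congr_deriv ?_
  simp only [affineAddPole, Pi.zero_apply]
  ring

theorem EqOffPole.dx {f : ℝ → ℝ → ℝ} (h : EqOffPole q f (affineAddPole q e m c n)) :
    EqOffPole q (dx f) (affineAddPole q m 0 (fun t => -(n * c t)) (n + 1)) := by
  intro x t hx
  have hnear : (fun x' => f x' t) =ᶠ[𝓝 x] fun x' => affineAddPole q e m c n x' t := by
    filter_upwards [(continuous_id.add continuous_const).continuousAt.eventually_ne hx]
      with x' hx' using h x' t hx'
  exact hnear.deriv_eq.trans (hasDerivAt_affineAddPole hx).deriv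

end

/-- The rational solution over the background `u = 1`:
`u = 1 - 2/(x+6t+a)²`, `y = 2a/(x+6t+a)² + 2a` on the set `x + 6t + a ≠ 0`
solves systems (Dx), (Dt), with `H0 = 16a²` and `H1 = -36`. -/
theorem rational_solution_background_one (a : ℝ) :
    ∀ x t : ℝ, x + 6 * t + a ≠ 0 →
      DxEqAt (fun x t => 1 - 2 / (x + 6 * t + a) ^ 2)
        (fun x t => 2 * a / (x + 6 * t + a) ^ 2 + 2 * a) x t ∧
      DtEqAt (fun x t => 1 - 2 / (x + 6 * t + a) ^ 2)
        (fun x t => 2 * a / (x + 6 * t + a) ^ 2 + 2 * a) x t ∧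
      H0expr (fun x t => 1 - 2 / (x + 6 * t + a) ^ 2)
        (fun x t => 2 * a / (x + 6 * t + a) ^ 2 + 2 * a) x t = 16 * a ^ 2 ∧
      H1expr (fun x t => 1 - 2 / (x + 6 * t + a) ^ 2)
        (fun x t => 2 * a / (x + 6 * t + a) ^ 2 + 2 * a) x t = -36 := by
  intro x t hx
  set u : ℝ → ℝ → ℝ := fun x t => 1 - 2 / (x + 6 * t + a) ^ 2
  set y : ℝ → ℝ → ℝ := fun x t => 2 * a / (x + 6 * t + a) ^ 2 + 2 * a
  set q : ℝ → ℝ := fun t => 6 * t + a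
  have hu : EqOffPole q u (affineAddPole q (fun _ => 1) 0 (fun _ => -2) 2) :=
    fun x t _ => by simp only [u, q, affineAddPole, Pi.zero_apply]; ring
  have hy : EqOffPole q y (affineAddPole q (fun _ => 2 * a) 0 (fun _ => 2 * a) 2) :=
    fun x t _ => by simp only [y, q, affineAddPole, Pi.zero_apply]; ring
  have hz : EqOffPole q (zfun u y)
      (affineAddPole q (fun t => 12 * t + 2 * a) (fun _ => 2) (fun t => 2 * a - 24 * t) 2) :=
    fun x t _ => by simp only [zfun, affineAddPole]; ring
  have hut : dt u x t = 6 * dx u x t := dt_comp_add_mul (fun s => 1 - 2 / (s + a) ^ 2) 6 x t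
  have hyt : dt y x t = 6 * dx y x t :=
    dt_comp_add_mul (fun s => 2 * a / (s + a) ^ 2 + 2 * a) 6 x t
  have hxq : x + q t ≠ 0 := by rwa [← add_assoc]
  simp only [DxEqAt, DtEqAt, H0expr, H1expr, hut, hyt, hu.dx.dx.dx x t hxq, hu.dx x t hxq,
    hu x t hxq, hy.dx.dx.dx x t hxq, hy.dx.dx x t hxq, hy.dx x t hxq, hy x t hxq,
    hz.dx.dx x t hxq, hz.dx x t hxq, hz x t hxq, affineAddPole, Pi.zero_apply, q]
  push_cast
  obtain ⟨s, hs, rfl⟩ : ∃ s, s ≠ 0 ∧ x = s - (6 * t + a) :=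
    ⟨_, hxq, (add_sub_cancel_right _ _).symm⟩
  simp only [sub_add_cancel]
  refine ⟨⟨?_, ?_⟩, ⟨?_, ?_⟩, ?_, ?_⟩ <;> field_simp <;> ring
end

section
/- Higher rational solution: Let a ∈ ℝ and set X = x + a, T = 12t + a. On the open set where X³ ≠ T, define u(x,t) = −6X(X³ + 2T)/(X³ − T)² and y(x,t) = −2X(X⁶ − 5X³T − 5T² + 9aX)/(X³ − T)². Then (u,y) satisfies both equations of system (Dx) and both equations of system (Dt), and the first integrals take the values H0 = 2y y_xx − y_x² + 4u y² = −100 and H1 = 2z z_xx − z_x² + 4(u−1)z² = −16a², where z = 12tu + 2x + y. -/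
/-- The `u`-component of the higher rational solution, with `X = x + a`,
`T = 12t + a`. -/
noncomputable def uRat (a : ℝ) : ℝ → ℝ → ℝ := fun x t =>
  -6 * (x + a) * ((x + a) ^ 3 + 2 * (12 * t + a)) / ((x + a) ^ 3 - (12 * t + a)) ^ 2

/-- The `y`-component of the higher rational solution, with `X = x + a`,
`T = 12t + a`. -/
noncomputable def yRat (a : ℝ) : ℝ → ℝ → ℝ := fun x t =>
  -2 * (x + a) * ((x + a) ^ 6 - 5 * (x + a) ^ 3 * (12 * t + a)
      - 5 * (12 * t + a) ^ 2 + 9 * a * (x + a)) / ((x + a) ^ 3 - (12 * t + a)) ^ 2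

/-!
With `X = x + a` and `T = 12t + a`, every function involved (`u`, `y`, `z`) is, for fixed `t`,
a polynomial in `X` divided by a power of `D = X³ - T`, and likewise, for fixed `x`, a polynomial
in `T` divided by a power of `D`. The quotient rule keeps this form, so all derivatives are
polynomial numerators over powers of `D`, computed symbolically with `Polynomial.derivative`.
Clearing the powers of `D` turns each of the six claims into a polynomial identity in `x, t, a`.
-/

open Polynomial Filter Topology

namespace Polynomial

variable {𝕜 : Type*} [NontriviallyNormedField 𝕜]

noncomputable def evalDivPow (p q : 𝕜[X]) (k : ℕ) (s : 𝕜) : 𝕜 := p.eval s / q.eval s ^ k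

noncomputable def divPowDerivNum (p q : 𝕜[X]) (k : ℕ) : 𝕜[X] :=
  derivative p * q - k * derivative q * p

theorem hasDerivAt_evalDivPow (p q : 𝕜[X]) (k : ℕ) {s : 𝕜} (hs : q.eval s ≠ 0) :
    HasDerivAt (evalDivPow p q k) (evalDivPow (divPowDerivNum p q k) q (k + 1) s) s := by
  refine ((p.hasDerivAt s).div ((q.hasDerivAt s).pow k) (pow_ne_zero k hs)).congr_deriv ?_
  simp only [evalDivPow, divPowDerivNum, eval_sub, eval_mul, eval_natCast, Pi.pow_apply]
  rcases k with _ | k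
  · simp [hs]
  · field_simp
    push_cast
    ring

/-- `f` need only agree with `p / q ^ k` off the zeros of `q`, so the conclusion has the shape of
the hypothesis and the lemma iterates. -/
theorem deriv_eq_evalDivPow_affine {f : 𝕜 → 𝕜} {p q : 𝕜[X]} {k : ℕ} {m c : 𝕜}
    (hf : ∀ s, q.eval (m * s + c) ≠ 0 → f s = evalDivPow p q k (m * s + c)) {s : 𝕜}
    (hs : q.eval (m * s + c) ≠ 0) :
    deriv f s = evalDivPow (C m * divPowDerivNum p q k) q (k + 1) (m * s + c) := by
  have hnear : ∀ᶠ s' in 𝓝 s, q.eval (m * s' + c) ≠ 0 :=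
    (q.continuous.comp ((continuous_const_mul m).add continuous_const)).continuousAt.eventually_ne
      hs
  have hcomp :=
    (hasDerivAt_evalDivPow p q k hs).comp s (((hasDerivAt_id s).const_mul m).add_const c)
  refine (EventuallyEq.deriv_eq (hnear.mono hf)).trans (hcomp.deriv.trans ?_)
  simp only [evalDivPow, eval_mul, eval_C]
  ring

end Polynomial

section PartialDerivatives

variable {f : ℝ → ℝ → ℝ} {m c : ℝ} {p q : ℝ[X]} {k : ℕ}

theorem dx_eq_evalDivPow {t : ℝ}
    (hf : ∀ s, q.eval (m * s + c) ≠ 0 → f s t = evalDivPow p q k (m * s + c)) :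
    ∀ s, q.eval (m * s + c) ≠ 0 →
      dx f s t = evalDivPow (C m * divPowDerivNum p q k) q (k + 1) (m * s + c) :=
  fun _ hs => deriv_eq_evalDivPow_affine hf hs

theorem dt_eq_evalDivPow {x : ℝ}
    (hf : ∀ s, q.eval (m * s + c) ≠ 0 → f x s = evalDivPow p q k (m * s + c)) :
    ∀ s, q.eval (m * s + c) ≠ 0 →
      dt f x s = evalDivPow (C m * divPowDerivNum p q k) q (k + 1) (m * s + c) :=
  fun _ hs => deriv_eq_evalDivPow_affine hf hs

end PartialDerivatives

section HigherRationalSolution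

/-! `…InX τ` is a polynomial in the variable `X = x + a` with `T = τ` frozen, used for
`x`-derivatives; `…InT ξ` is a polynomial in the variable `T = 12t + a` with `X = ξ` frozen,
used for `t`-derivatives. The point `1 * x + a` is the affine substitution `m * s + c` of
`deriv_eq_evalDivPow_affine` with slope `1`. -/

variable (a : ℝ)

noncomputable def denomInX (τ : ℝ) : ℝ[X] := X ^ 3 - C τ

noncomputable def uNumInX (τ : ℝ) : ℝ[X] := -6 * X * (X ^ 3 + 2 * C τ)

noncomputable def yNumInX (τ : ℝ) : ℝ[X] :=
  -2 * X * (X ^ 6 - 5 * X ^ 3 * C τ - 5 * C τ ^ 2 + 9 * C a * X)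

noncomputable def zNumInX (t : ℝ) : ℝ[X] :=
  12 * C t * uNumInX (12 * t + a) + 2 * (X - C a) * denomInX (12 * t + a) ^ 2
    + yNumInX a (12 * t + a)

noncomputable def denomInT (ξ : ℝ) : ℝ[X] := C (ξ ^ 3) - X

noncomputable def uNumInT (ξ : ℝ) : ℝ[X] := -6 * C ξ * (C (ξ ^ 3) + 2 * X)

noncomputable def yNumInT (ξ : ℝ) : ℝ[X] :=
  -2 * C ξ * (C (ξ ^ 6) - 5 * C (ξ ^ 3) * X - 5 * X ^ 2 + 9 * C a * C ξ)

theorem eval_denomInT (ξ τ : ℝ) : (denomInT ξ).eval τ = (denomInX τ).eval ξ := by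
  simp [denomInT, denomInX]

theorem eval_denomInX_ne_zero {x t : ℝ} (h : (x + a) ^ 3 ≠ 12 * t + a) :
    (denomInX (12 * t + a)).eval (1 * x + a) ≠ 0 := by
  simpa [denomInX, sub_eq_zero]

theorem eval_denomInT_ne_zero {x t : ℝ} (h : (x + a) ^ 3 ≠ 12 * t + a) :
    (denomInT (x + a)).eval (12 * t + a) ≠ 0 := by
  simpa [denomInT, sub_eq_zero]

theorem uRat_eq_evalDivPow_inX (t s : ℝ) :
    uRat a s t = evalDivPow (uNumInX (12 * t + a)) (denomInX (12 * t + a)) 2 (1 * s + a) := by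
  simp [uRat, evalDivPow, uNumInX, denomInX]

theorem yRat_eq_evalDivPow_inX (t s : ℝ) :
    yRat a s t = evalDivPow (yNumInX a (12 * t + a)) (denomInX (12 * t + a)) 2 (1 * s + a) := by
  simp [yRat, evalDivPow, yNumInX, denomInX]

theorem zfun_eq_evalDivPow_inX (t s : ℝ) (hs : (denomInX (12 * t + a)).eval (1 * s + a) ≠ 0) :
    zfun (uRat a) (yRat a) s t =
      evalDivPow (zNumInX a t) (denomInX (12 * t + a)) 2 (1 * s + a) := by
  simp only [zfun, uRat_eq_evalDivPow_inX, yRat_eq_evalDivPow_inX, evalDivPow, zNumInX, eval_add,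
    eval_mul, eval_pow, eval_sub, eval_X, eval_C, eval_ofNat, one_mul] at hs ⊢
  field_simp
  ring

theorem uRat_eq_evalDivPow_inT (x s : ℝ) :
    uRat a x s = evalDivPow (uNumInT (x + a)) (denomInT (x + a)) 2 (12 * s + a) := by
  simp [uRat, evalDivPow, uNumInT, denomInT]

theorem yRat_eq_evalDivPow_inT (x s : ℝ) :
    yRat a x s = evalDivPow (yNumInT a (x + a)) (denomInT (x + a)) 2 (12 * s + a) := by
  simp [yRat, evalDivPow, yNumInT, denomInT]

variable {a}

/-! Below, `D` is generalized so that `field_simp` sees a single atom with `D ≠ 0` and clears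
exactly the common power of `D`, before the numerators are expanded for `ring`. -/

theorem dxEqAt_uRat_yRat {x t : ℝ} (h : (x + a) ^ 3 ≠ 12 * t + a) :
    DxEqAt (uRat a) (yRat a) x t := by
  have hx := eval_denomInX_ne_zero a h
  have hu1 := dx_eq_evalDivPow fun s _ => uRat_eq_evalDivPow_inX a t s
  have hu2 := dx_eq_evalDivPow hu1
  have hy1 := dx_eq_evalDivPow fun s _ => yRat_eq_evalDivPow_inX a t s
  have hy2 := dx_eq_evalDivPow hy1
  rw [DxEqAt, dx_eq_evalDivPow hu2 x hx, hu1 x hx, hy1 x hx, dx_eq_evalDivPow hy2 x hx,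
    uRat_eq_evalDivPow_inX, yRat_eq_evalDivPow_inX]
  simp only [evalDivPow, one_mul, Nat.reduceAdd] at hx ⊢
  generalize hD : eval (x + a) (denomInX (12 * t + a)) = D at hx ⊢
  constructor
  all_goals
    field_simp
    subst hD
    simp only [divPowDerivNum, uNumInX, yNumInX, denomInX, derivative_mul, derivative_add,
    derivative_sub, derivative_neg, derivative_pow, derivative_X, derivative_C, derivative_ofNat,
      derivative_zero, derivative_one, map_one, eval_mul, eval_add, eval_sub, eval_neg, eval_pow,
      eval_X, eval_C, eval_ofNat, eval_one, eval_zero, Nat.cast_ofNat, Nat.cast_one, Nat.reduceSub]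
    ring

theorem dtEqAt_uRat_yRat {x t : ℝ} (h : (x + a) ^ 3 ≠ 12 * t + a) :
    DtEqAt (uRat a) (yRat a) x t := by
  have hx := eval_denomInX_ne_zero a h
  have ht := eval_denomInT_ne_zero a h
  have hu1 := dx_eq_evalDivPow fun s _ => uRat_eq_evalDivPow_inX a t s
  have hu2 := dx_eq_evalDivPow hu1
  rw [DtEqAt, dx_eq_evalDivPow hu2 x hx, hu1 x hx,
    dx_eq_evalDivPow (fun s _ => yRat_eq_evalDivPow_inX a t s) x hx,
    dt_eq_evalDivPow (fun s _ => uRat_eq_evalDivPow_inT a x s) t ht,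
    dt_eq_evalDivPow (fun s _ => yRat_eq_evalDivPow_inT a x s) t ht,
    uRat_eq_evalDivPow_inX, yRat_eq_evalDivPow_inX]
  simp only [evalDivPow, one_mul, Nat.reduceAdd, eval_denomInT] at hx ⊢
  generalize hD : eval (x + a) (denomInX (12 * t + a)) = D at hx ⊢
  constructor
  all_goals
    field_simp
    subst hD
    simp only [divPowDerivNum, uNumInX, yNumInX, uNumInT, yNumInT, denomInX, denomInT,
      derivative_mul, derivative_add, derivative_sub, derivative_neg, derivative_pow, derivative_X,
      derivative_C, derivative_ofNat, derivative_zero, derivative_one, map_one, eval_mul, eval_add,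
      eval_sub, eval_neg, eval_pow, eval_X, eval_C, eval_ofNat, eval_one, eval_zero, Nat.cast_ofNat,
      Nat.cast_one, Nat.reduceSub]
    ring

theorem H0expr_uRat_yRat {x t : ℝ} (h : (x + a) ^ 3 ≠ 12 * t + a) :
    H0expr (uRat a) (yRat a) x t = -100 := by
  have hx := eval_denomInX_ne_zero a h
  have hy1 := dx_eq_evalDivPow fun s _ => yRat_eq_evalDivPow_inX a t s
  rw [H0expr, dx_eq_evalDivPow hy1 x hx, hy1 x hx, uRat_eq_evalDivPow_inX, yRat_eq_evalDivPow_inX]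
  simp only [evalDivPow, one_mul, Nat.reduceAdd] at hx ⊢
  generalize hD : eval (x + a) (denomInX (12 * t + a)) = D at hx ⊢
  field_simp
  subst hD
  simp only [divPowDerivNum, uNumInX, yNumInX, denomInX, derivative_mul, derivative_add,
    derivative_sub, derivative_neg, derivative_pow, derivative_X, derivative_C, derivative_ofNat,
    derivative_zero, derivative_one, map_one, eval_mul, eval_add, eval_sub, eval_neg, eval_pow,
    eval_X, eval_C, eval_ofNat, eval_one, eval_zero, Nat.cast_ofNat, Nat.cast_one, Nat.reduceSub]
  ring

theorem H1expr_uRat_yRat {x t : ℝ} (h : (x + a) ^ 3 ≠ 12 * t + a) :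
    H1expr (uRat a) (yRat a) x t = -16 * a ^ 2 := by
  have hx := eval_denomInX_ne_zero a h
  have hz1 := dx_eq_evalDivPow (zfun_eq_evalDivPow_inX a t)
  rw [H1expr, dx_eq_evalDivPow hz1 x hx, hz1 x hx, zfun_eq_evalDivPow_inX a t x hx,
    uRat_eq_evalDivPow_inX]
  simp only [evalDivPow, one_mul, Nat.reduceAdd] at hx ⊢
  generalize hD : eval (x + a) (denomInX (12 * t + a)) = D at hx ⊢
  field_simp
  subst hD
  simp only [divPowDerivNum, zNumInX, uNumInX, yNumInX, denomInX, derivative_mul, derivative_add,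
    derivative_sub, derivative_neg, derivative_pow, derivative_X, derivative_C, derivative_ofNat,
    derivative_zero, derivative_one, map_one, eval_mul, eval_add, eval_sub, eval_neg, eval_pow,
    eval_X, eval_C, eval_ofNat, eval_one, eval_zero, Nat.cast_ofNat, Nat.cast_one, Nat.reduceSub]
  ring

end HigherRationalSolution

/-- The higher rational solution solves systems (Dx), (Dt) on the set where
`X³ ≠ T`, with `H0 = -100` and `H1 = -16a²`. -/
theorem higher_rational_solution (a : ℝ) :
    ∀ x t : ℝ, (x + a) ^ 3 ≠ 12 * t + a →
      DxEqAt (uRat a) (yRat a) x t ∧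
      DtEqAt (uRat a) (yRat a) x t ∧
      H0expr (uRat a) (yRat a) x t = -100 ∧
      H1expr (uRat a) (yRat a) x t = -16 * a ^ 2 :=
  fun _ _ h => ⟨dxEqAt_uRat_yRat h, dtEqAt_uRat_yRat h, H0expr_uRat_yRat h, H1expr_uRat_yRat h⟩
end

section
/- Reduction of system (Dx0) to a second order equation for y: Let I ⊂ ℝ \ {0} be an open interval and let u, y : I → ℝ be smooth functions satisfying system (Dx0): x u′ + 2u − y′ − 2 = 0 and y‴ + 4u y′ + 2u′ y = 0 on I, with y(x) ≠ 0 and y(x) + 2x ≠ 0 for all x ∈ I. Then the quantities H0 := 2y y″ − (y′)² + 4u y² and H1 := 2(2x+y) y″ − (2 + y′)² + 4(u−1)(2x+y)² are constant on I, and y satisfies on I the equation (yeq): y″ = (y+x)((y′)² + H0)/(y(y+2x)) − y(y′ + (H1 − H0)/4 + 1)/(x(y+2x)) − (y/x)(y+2x). -/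
lemma const_on_Ioo {f : ℝ → ℝ} {A B : ℝ}
    (h : ∀ x ∈ Set.Ioo A B, HasDerivAt f 0 x)
    {a b : ℝ} (ha : a ∈ Set.Ioo A B) (hb : b ∈ Set.Ioo A B) : f a = f b := by
  apply (convex_Ioo A B).is_const_of_fderivWithin_eq_zero
    (fun x hx => (h x hx).differentiableAt.differentiableWithinAt) ?_ ha hb
  intro x hx
  rw [fderivWithin_of_isOpen isOpen_Ioo hx, (h x hx).hasFDerivAt.fderiv]
  ext
  simp

/-- Reduction of system (Dx0) to the second order equation (yeq) for `y`:
on an open interval not containing `0`, solutions of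
`x u' + 2u - y' - 2 = 0`, `y''' + 4u y' + 2u' y = 0` with `y ≠ 0`, `y + 2x ≠ 0`
have constant first integrals `H0`, `H1`, and `y` satisfies (yeq). -/
theorem Dx0_to_yeq (A B : ℝ) (u y : ℝ → ℝ)
    (hI : (0 : ℝ) ∉ Set.Ioo A B)
    (hu : ContDiffOn ℝ (⊤ : ℕ∞) u (Set.Ioo A B)) (hy : ContDiffOn ℝ (⊤ : ℕ∞) y (Set.Ioo A B))
    (heq1 : ∀ x ∈ Set.Ioo A B, x * deriv u x + 2 * u x - deriv y x - 2 = 0)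
    (heq2 : ∀ x ∈ Set.Ioo A B,
      deriv (deriv (deriv y)) x + 4 * u x * deriv y x + 2 * deriv u x * y x = 0)
    (hy0 : ∀ x ∈ Set.Ioo A B, y x ≠ 0)
    (hy2x : ∀ x ∈ Set.Ioo A B, y x + 2 * x ≠ 0) :
    ∃ H0 H1 : ℝ,
      (∀ x ∈ Set.Ioo A B,
        2 * y x * deriv (deriv y) x - (deriv y x) ^ 2 + 4 * u x * (y x) ^ 2 = H0) ∧
      (∀ x ∈ Set.Ioo A B,
        2 * (2 * x + y x) * deriv (deriv y) x - (2 + deriv y x) ^ 2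
          + 4 * (u x - 1) * (2 * x + y x) ^ 2 = H1) ∧
      (∀ x ∈ Set.Ioo A B,
        deriv (deriv y) x =
          (y x + x) * ((deriv y x) ^ 2 + H0) / (y x * (y x + 2 * x))
          - y x * (deriv y x + (H1 - H0) / 4 + 1) / (x * (y x + 2 * x))
          - (y x / x) * (y x + 2 * x)) := by
  rcases Set.eq_empty_or_nonempty (Set.Ioo A B) with hE | ⟨x0, hx0⟩
  · exact ⟨0, 0, by simp [hE], by simp [hE], by simp [hE]⟩
  have hopen : IsOpen (Set.Ioo A B) := isOpen_Ioo
  -- smoothness of derivatives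
  have hy1 : ContDiffOn ℝ (⊤ : ℕ∞) (deriv y) (Set.Ioo A B) := hy.deriv_of_isOpen hopen (by simp)
  have hy2 : ContDiffOn ℝ (⊤ : ℕ∞) (deriv (deriv y)) (Set.Ioo A B) := hy1.deriv_of_isOpen hopen (by simp)
  -- pointwise HasDerivAt statements
  have hd : ∀ x ∈ Set.Ioo A B,
      HasDerivAt y (deriv y x) x ∧ HasDerivAt (deriv y) (deriv (deriv y) x) x ∧
      HasDerivAt (deriv (deriv y)) (deriv (deriv (deriv y)) x) x ∧
      HasDerivAt u (deriv u x) x := by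
    intro x hx
    have hn := hopen.mem_nhds hx
    exact ⟨((hy.contDiffAt hn).differentiableAt (by simp)).hasDerivAt,
      ((hy1.contDiffAt hn).differentiableAt (by simp)).hasDerivAt,
      ((hy2.contDiffAt hn).differentiableAt (by simp)).hasDerivAt,
      ((hu.contDiffAt hn).differentiableAt (by simp)).hasDerivAt⟩
  set F0 : ℝ → ℝ := fun x =>
    2 * y x * deriv (deriv y) x - (deriv y x) ^ 2 + 4 * u x * (y x) ^ 2 with hF0
  set F1 : ℝ → ℝ := fun x =>
    2 * (2 * x + y x) * deriv (deriv y) x - (2 + deriv y x) ^ 2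
      + 4 * (u x - 1) * (2 * x + y x) ^ 2 with hF1
  have hdF0 : ∀ x ∈ Set.Ioo A B, HasDerivAt F0 0 x := by
    intro x hx
    obtain ⟨h1, h2, h3, h4⟩ := hd x hx
    have h := (((h1.const_mul 2).mul h3).sub (h2.pow 2)).add
      ((h4.const_mul 4).mul (h1.pow 2))
    simp only [Pi.pow_apply, Pi.add_apply] at h
    have hv : 2 * deriv y x * deriv (deriv y) x + 2 * y x * deriv (deriv (deriv y)) x
        - (2 : ℕ) * deriv y x ^ (2 - 1) * deriv (deriv y) x
        + (4 * deriv u x * y x ^ 2 + 4 * u x * ((2 : ℕ) * y x ^ (2 - 1) * deriv y x)) = 0 := by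
      push_cast
      linear_combination 2 * y x * (heq2 x hx)
    rw [hv] at h
    exact h
  have hdF1 : ∀ x ∈ Set.Ioo A B, HasDerivAt F1 0 x := by
    intro x hx
    obtain ⟨h1, h2, h3, h4⟩ := hd x hx
    have hg : HasDerivAt (fun t => 2 * t + y t) (2 + deriv y x) x :=
      by have h' := ((hasDerivAt_id x).const_mul 2).add h1; rw [mul_one] at h'; exact h'
    have h := (((hg.const_mul 2).mul h3).sub (((hasDerivAt_const x (2:ℝ)).add h2).pow 2)).add
      (((h4.sub_const 1).const_mul 4).mul (hg.pow 2))
    simp only [Pi.pow_apply, Pi.add_apply] at h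
    have hv : 2 * (2 + deriv y x) * deriv (deriv y) x
        + 2 * (2 * x + y x) * deriv (deriv (deriv y)) x
        - (2 : ℕ) * (2 + deriv y x) ^ (2 - 1) * (0 + deriv (deriv y) x)
        + (4 * deriv u x * (2 * x + y x) ^ 2
          + 4 * (u x - 1) * ((2 : ℕ) * (2 * x + y x) ^ (2 - 1) * (2 + deriv y x))) = 0 := by
      push_cast
      linear_combination 2 * (2 * x + y x) * (heq2 x hx) + 8 * (2 * x + y x) * (heq1 x hx)
    rw [hv] at h
    exact h
  refine ⟨F0 x0, F1 x0, fun x hx => const_on_Ioo hdF0 hx hx0,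
    fun x hx => const_on_Ioo hdF1 hx hx0, ?_⟩
  intro x hx
  have hxne : x ≠ 0 := fun h => hI (h ▸ hx)
  have e1 : F0 x = F0 x0 := const_on_Ioo hdF0 hx hx0
  have e2 : F1 x = F1 x0 := const_on_Ioo hdF1 hx hx0
  rw [hF0] at e1
  rw [hF1] at e2
  simp only at e1 e2
  have h0 := hy0 x hx
  have h2x := hy2x x hx
  field_simp
  rw [eq_div_iff (by rwa [mul_comm])]
  linear_combination (2 * x + y x)^2 * e1 - (y x)^2 * e2
end

section
/- Second part of Proposition 3 (map from Painlevé III): Let I ⊂ ℝ \ {0} be an open interval, α, β ∈ ℝ, and let q : I → ℝ be a smooth solution of the Painlevé III equation q″ = (q′)²/q − q′/x + (α q² + β)/x + γ q³ + δ/q with γ = 1 and δ = −1, with q(x) ≠ 0 on I. Define y := x q′ − x q² + (1 − α) q − x, and assume y(x) ≠ 0 and y(x) + 2x ≠ 0 on I. Then y satisfies on I the equation (yeq) with constants H0 = −(α + β − 2)² and H1 = −(α − β − 2)². -/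
/-- The substitution `y = x q' - x q² + (1 - α) q - x` of Proposition 3. -/
noncomputable def yFromQ (α : ℝ) (q : ℝ → ℝ) : ℝ → ℝ := fun x =>
  x * deriv q x - x * (q x) ^ 2 + (1 - α) * q x - x

/-- Second part of Proposition 3: the substitution `y = x q' - x q² + (1-α)q - x`
maps solutions of the Painlevé III equation with `γ = 1`, `δ = -1` into
solutions of equation (yeq) with `H0 = -(α+β-2)²`, `H1 = -(α-β-2)²`. -/
theorem P3_to_yeq (A B α β : ℝ) (q : ℝ → ℝ)
    (hI : (0 : ℝ) ∉ Set.Ioo A B)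
    (hq : ContDiffOn ℝ (⊤ : ℕ∞) q (Set.Ioo A B))
    (hq0 : ∀ x ∈ Set.Ioo A B, q x ≠ 0)
    (hP3 : ∀ x ∈ Set.Ioo A B,
      deriv (deriv q) x =
        (deriv q x) ^ 2 / q x - deriv q x / x + (α * (q x) ^ 2 + β) / x
        + 1 * (q x) ^ 3 + (-1) / q x)
    (hy0 : ∀ x ∈ Set.Ioo A B, yFromQ α q x ≠ 0)
    (hy2x : ∀ x ∈ Set.Ioo A B, yFromQ α q x + 2 * x ≠ 0) :
    ∀ x ∈ Set.Ioo A B,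
      deriv (deriv (yFromQ α q)) x =
        (yFromQ α q x + x) * ((deriv (yFromQ α q) x) ^ 2 + (-(α + β - 2) ^ 2))
            / (yFromQ α q x * (yFromQ α q x + 2 * x))
        - yFromQ α q x * (deriv (yFromQ α q) x
            + ((-(α - β - 2) ^ 2) - (-(α + β - 2) ^ 2)) / 4 + 1)
            / (x * (yFromQ α q x + 2 * x))
        - (yFromQ α q x / x) * (yFromQ α q x + 2 * x) := by
  have hs : IsOpen (Set.Ioo A B) := isOpen_Ioo
  have hq' : ContDiffOn ℝ (⊤ : ℕ∞) (deriv q) (Set.Ioo A B) :=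
    hq.deriv_of_isOpen hs (by simp)
  -- derivative of q and deriv q at points of the interval
  have hqt : ∀ t ∈ Set.Ioo A B, HasDerivAt q (deriv q t) t := fun t ht =>
    ((hq.contDiffAt (hs.mem_nhds ht)).differentiableAt (by simp)).hasDerivAt
  have hpt : ∀ t ∈ Set.Ioo A B, HasDerivAt (deriv q) (deriv (deriv q) t) t := fun t ht =>
    ((hq'.contDiffAt (hs.mem_nhds ht)).differentiableAt (by simp)).hasDerivAt
  have ht0 : ∀ t ∈ Set.Ioo A B, t ≠ 0 := by
    intro t ht h; exact hI (h ▸ ht)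
  -- first derivative of y, with q'' eliminated using the Painlevé III equation
  have hyp : ∀ t ∈ Set.Ioo A B, deriv (yFromQ α q) t =
      (1 - α) * deriv q t + (t * deriv q t ^ 2) / q t + (α * q t ^ 2 + β)
        + t * q t ^ 3 - t / q t - q t ^ 2 - 2 * (t * q t * deriv q t) - 1 := by
    intro t ht
    have H := ((((hasDerivAt_id t).mul (hpt t ht)).sub
        ((hasDerivAt_id t).mul ((hqt t ht).pow 2))).add
        ((hqt t ht).const_mul (1 - α))).sub (hasDerivAt_id t)
    have hE := H.deriv
    rw [hP3 t ht] at hE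
    have h1 : t ≠ 0 := ht0 t ht
    have h2 : q t ≠ 0 := hq0 t ht
    refine hE.trans ?_
    simp only [id, Pi.pow_apply, Pi.mul_apply, Pi.div_apply, Nat.cast_ofNat]
    field_simp
    ring
  intro x hx
  have hx0 : x ≠ 0 := ht0 x hx
  have hqx0 : q x ≠ 0 := hq0 x hx
  -- second derivative via the eventual equality above
  have heq : deriv (yFromQ α q) =ᶠ[nhds x]
      (fun t => (1 - α) * deriv q t + (t * deriv q t ^ 2) / q t + (α * q t ^ 2 + β)
        + t * q t ^ 3 - t / q t - q t ^ 2 - 2 * (t * q t * deriv q t) - 1) :=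
    Filter.eventuallyEq_of_mem (hs.mem_nhds hx) hyp
  rw [heq.deriv_eq]
  have HG := ((((((((hpt x hx).const_mul (1 - α)).add
      ((((hasDerivAt_id x).mul ((hpt x hx).pow 2)).div (hqt x hx) hqx0))).add
      ((((hqt x hx).pow 2).const_mul α).add_const β)).add
      ((hasDerivAt_id x).mul ((hqt x hx).pow 3))).sub
      ((hasDerivAt_id x).div (hqt x hx) hqx0)).sub
      ((hqt x hx).pow 2)).sub
      ((((hasDerivAt_id x).mul (hqt x hx)).mul (hpt x hx)).const_mul 2)).sub_const 1
  have hG := HG.deriv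
  rw [hP3 x hx] at hG
  rw [hyp x hx]
  refine hG.trans ?_
  have hY : yFromQ α q x ≠ 0 := hy0 x hx
  have hY2 : yFromQ α q x + 2 * x ≠ 0 := hy2x x hx
  simp only [id, Pi.pow_apply, Pi.mul_apply, Pi.div_apply, Nat.cast_ofNat]
  generalize hYd : yFromQ α q x = Y at hY hY2 ⊢
  generalize hZd : Y + 2 * x = Z at hY2 ⊢
  field_simp
  subst hZd
  subst hYd
  simp only [yFromQ]
  ring
end

section
/- Taylor coefficients of regular solutions at x = 0: Let u, y be real-analytic functions on a neighborhood of 0 in ℝ satisfying system (Dx0): x u′ + 2u − y′ − 2 = 0 and y‴ + 4u y′ + 2u′ y = 0, with Taylor expansions y(x) = Σ_{n≥0} a_n xⁿ and u(x) = Σ_{n≥0} b_n xⁿ. Then b_0 = 1 + a_1/2; b_{n−1} = (n/(n+1)) a_n for all n ≥ 2; and a_n = −(2/(n(n−1)(n−2))) · Σ_{j=0}^{n−2} (2n − 4 − j) b_j a_{n−2−j} for all n ≥ 3. In particular, the coefficients a_0, a_1, a_2 determine all remaining coefficients. -/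
/-!
Both equations of (Dx0) hold on a neighbourhood of `0`, so every Taylor coefficient at `0` of
their left-hand sides vanishes. The Leibniz rule expresses the coefficients of products as
Cauchy products of the coefficients of the factors, and multiplication by `x` only shifts them.
The first equation then yields `(m + 3) b_{m+1} = (m + 2) a_{m+2}`, together with its value at
`x = 0`, and the second one yields the recurrence.
-/
open Filter Topology Finset Nat

noncomputable def taylorCoeff {𝕜 : Type*} [NontriviallyNormedField 𝕜] (f : 𝕜 → 𝕜) (x : 𝕜)
    (n : ℕ) : 𝕜 :=
  iteratedDeriv n f x / n !

section TaylorCoeff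

variable {𝕜 : Type*} [NontriviallyNormedField 𝕜] {f g : 𝕜 → 𝕜} {x : 𝕜} {n : ℕ}

theorem taylorCoeff_zero (f : 𝕜 → 𝕜) (x : 𝕜) : taylorCoeff f x 0 = f x := by
  simp [taylorCoeff]

theorem taylorCoeff_deriv [CharZero 𝕜] (f : 𝕜 → 𝕜) (x : 𝕜) (n : ℕ) :
    taylorCoeff (deriv f) x n = (n + 1) * taylorCoeff f x (n + 1) := by
  rw [taylorCoeff, taylorCoeff, iteratedDeriv_succ', factorial_succ]
  push_cast
  field_simp

theorem taylorCoeff_fun_add (hf : ContDiffAt 𝕜 n f x) (hg : ContDiffAt 𝕜 n g x) :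
    taylorCoeff (fun t ↦ f t + g t) x n = taylorCoeff f x n + taylorCoeff g x n := by
  rw [taylorCoeff, iteratedDeriv_fun_add hf hg, add_div]; rfl

theorem taylorCoeff_fun_sub (hf : ContDiffAt 𝕜 n f x) (hg : ContDiffAt 𝕜 n g x) :
    taylorCoeff (fun t ↦ f t - g t) x n = taylorCoeff f x n - taylorCoeff g x n := by
  rw [taylorCoeff, iteratedDeriv_fun_sub hf hg, sub_div]; rfl

theorem taylorCoeff_const_mul (c : 𝕜) (f : 𝕜 → 𝕜) :
    taylorCoeff (fun t ↦ c * f t) x n = c * taylorCoeff f x n := by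
  rw [taylorCoeff, iteratedDeriv_const_mul_field, mul_div_assoc]; rfl

theorem taylorCoeff_const (c : 𝕜) (hn : n ≠ 0) : taylorCoeff (fun _ ↦ c) x n = 0 := by
  rw [taylorCoeff, iteratedDeriv_const, if_neg hn, zero_div]

theorem taylorCoeff_eq_zero_of_eventually_eq_zero (h : ∀ᶠ t in 𝓝 x, f t = 0) (n : ℕ) :
    taylorCoeff f x n = 0 := by
  rw [taylorCoeff, Filter.EventuallyEq.iteratedDeriv_eq n (g := fun _ ↦ 0) h]
  simp

theorem taylorCoeff_fun_mul [CharZero 𝕜] (hf : ContDiffAt 𝕜 n f x) (hg : ContDiffAt 𝕜 n g x) :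
    taylorCoeff (fun t ↦ f t * g t) x n =
      ∑ i ∈ range (n + 1), taylorCoeff f x i * taylorCoeff g x (n - i) := by
  rw [taylorCoeff, iteratedDeriv_fun_mul hf hg, sum_div]
  refine sum_congr rfl fun i hi ↦ ?_
  have hin : i ≤ n := Nat.lt_succ_iff.mp (mem_range.mp hi)
  have hfac := choose_mul_factorial_mul_factorial hin
  have hchoose : (n.choose i : 𝕜) ≠ 0 := cast_ne_zero.mpr (choose_pos hin).ne'
  rw [taylorCoeff, taylorCoeff, ← hfac]
  push_cast
  field_simp

theorem taylorCoeff_id_mul_zero [CharZero 𝕜] (hf : ContDiffAt 𝕜 (n + 1 : ℕ) f 0) :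
    taylorCoeff (fun t ↦ t * f t) 0 (n + 1) = taylorCoeff f 0 n := by
  rw [taylorCoeff_fun_mul (f := fun t ↦ t) contDiffAt_fun_id hf, sum_eq_single 1]
  · simp [taylorCoeff, iteratedDeriv_fun_id_zero]
  · intro i _ hi
    simp [taylorCoeff, iteratedDeriv_fun_id_zero, hi]
  · simp

end TaylorCoeff

/-- The weight `2n - 4 - j` of the recurrence splits as `2 (n - 2 - j) + j`: the contributions
of `4 u y'` and of `2 u' y`. -/
theorem sum_range_weighted_convolution {R : Type*} [CommRing R] (a b : ℕ → R) (m : ℕ) :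
    ∑ j ∈ range (m + 2), (2 * ((m : R) + 1 - j) + j) * b j * a (m + 1 - j) =
      2 * ∑ i ∈ range (m + 1), b i * ((((m - i : ℕ) : R) + 1) * a (m - i + 1)) +
        ∑ i ∈ range (m + 1), ((i : R) + 1) * b (i + 1) * a (m - i) := by
  have hweight : ∀ j : ℕ, (2 * ((m : R) + 1 - j) + j) * b j * a (m + 1 - j) =
      2 * (b j * (((m : R) + 1 - j) * a (m + 1 - j))) + j * b j * a (m + 1 - j) :=
    fun j ↦ by ring
  simp only [hweight, sum_add_distrib, ← mul_sum]
  congr 1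
  · congr 1
    rw [sum_range_succ]
    refine (add_eq_left.mpr (by push_cast; ring)).trans (sum_congr rfl fun i hi ↦ ?_)
    have hi : i ≤ m := Nat.lt_succ_iff.mp (mem_range.mp hi)
    rw [Nat.cast_sub hi, Nat.sub_add_comm hi]
    ring
  · rw [sum_range_succ']
    simp

section Dx0

variable {𝕜 : Type*} [NontriviallyNormedField 𝕜] [CharZero 𝕜] [CompleteSpace 𝕜] {u y : 𝕜 → 𝕜}

attribute [local fun_prop] AnalyticAt.contDiffAt

theorem taylorCoeff_relation_of_first_Dx0_eq (hu : AnalyticAt 𝕜 u 0) (hy : AnalyticAt 𝕜 y 0)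
    (h : ∀ᶠ x in 𝓝 0, x * deriv u x + 2 * u x - deriv y x - 2 = 0) (m : ℕ) :
    (m + 3) * taylorCoeff u 0 (m + 1) = (m + 2) * taylorCoeff y 0 (m + 2) := by
  have h := taylorCoeff_eq_zero_of_eventually_eq_zero h (m + 1)
  simp (disch := fun_prop) only [taylorCoeff_fun_sub, taylorCoeff_fun_add] at h
  rw [taylorCoeff_id_mul_zero (by fun_prop), taylorCoeff_const_mul,
    taylorCoeff_const _ (succ_ne_zero m), taylorCoeff_deriv, taylorCoeff_deriv] at h
  push_cast at h
  linear_combination h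

theorem taylorCoeff_recurrence_of_second_Dx0_eq (hu : AnalyticAt 𝕜 u 0) (hy : AnalyticAt 𝕜 y 0)
    (h : ∀ᶠ x in 𝓝 0,
      deriv (deriv (deriv y)) x + 4 * u x * deriv y x + 2 * deriv u x * y x = 0) (m : ℕ) :
    (m + 1) * (m + 2) * (m + 3) * taylorCoeff y 0 (m + 3) =
      -2 * ∑ j ∈ range (m + 2),
        (2 * ((m : 𝕜) + 1 - j) + j) * taylorCoeff u 0 j * taylorCoeff y 0 (m + 1 - j) := by
  have h := taylorCoeff_eq_zero_of_eventually_eq_zero h m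
  simp (disch := fun_prop) only [taylorCoeff_fun_add] at h
  simp only [mul_assoc, taylorCoeff_const_mul] at h
  simp (disch := fun_prop) only [taylorCoeff_fun_mul, taylorCoeff_deriv] at h
  rw [sum_range_weighted_convolution]
  push_cast at h
  linear_combination h

end Dx0

/-- Taylor coefficients of regular solutions of system (Dx0) at `x = 0`:
with `y = Σ aₙ xⁿ`, `u = Σ bₙ xⁿ`, one has `b₀ = 1 + a₁/2`,
`b_{n-1} = n/(n+1) · aₙ` for `n ≥ 2`, and the recurrence
`aₙ = -2/(n(n-1)(n-2)) · Σ_{j=0}^{n-2} (2n-4-j) bⱼ a_{n-2-j}` for `n ≥ 3`. -/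
theorem taylor_coefficients_Dx0 (r : ℝ) (hr : 0 < r) (u y : ℝ → ℝ)
    (hu : AnalyticOnNhd ℝ u (Set.Ioo (-r) r))
    (hy : AnalyticOnNhd ℝ y (Set.Ioo (-r) r))
    (heq1 : ∀ x ∈ Set.Ioo (-r) r, x * deriv u x + 2 * u x - deriv y x - 2 = 0)
    (heq2 : ∀ x ∈ Set.Ioo (-r) r,
      deriv (deriv (deriv y)) x + 4 * u x * deriv y x + 2 * deriv u x * y x = 0)
    (a b : ℕ → ℝ)
    (ha : ∀ n, a n = iteratedDeriv n y 0 / n.factorial)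
    (hb : ∀ n, b n = iteratedDeriv n u 0 / n.factorial) :
    b 0 = 1 + a 1 / 2 ∧
    (∀ n : ℕ, 2 ≤ n → b (n - 1) = ((n : ℝ) / ((n : ℝ) + 1)) * a n) ∧
    (∀ n : ℕ, 3 ≤ n →
      a n = -(2 / ((n : ℝ) * ((n : ℝ) - 1) * ((n : ℝ) - 2)))
        * ∑ j ∈ Finset.range (n - 1),
            (2 * (n : ℝ) - 4 - (j : ℝ)) * b j * a (n - 2 - j)) := by
  have h0 : (0 : ℝ) ∈ Set.Ioo (-r) r := ⟨neg_lt_zero.mpr hr, hr⟩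
  have hnhds : Set.Ioo (-r) r ∈ 𝓝 (0 : ℝ) := Ioo_mem_nhds h0.1 h0.2
  obtain rfl : a = taylorCoeff y 0 := funext ha
  obtain rfl : b = taylorCoeff u 0 := funext hb
  have hfirst := taylorCoeff_relation_of_first_Dx0_eq (hu 0 h0) (hy 0 h0)
    (eventually_of_mem hnhds heq1)
  have hsecond := taylorCoeff_recurrence_of_second_Dx0_eq (hu 0 h0) (hy 0 h0)
    (eventually_of_mem hnhds heq2)
  refine ⟨?_, fun n hn ↦ ?_, fun n hn ↦ ?_⟩
  · have hy' := taylorCoeff_deriv y 0 0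
    rw [taylorCoeff_zero] at hy' ⊢
    linear_combination (heq1 0 h0 + hy') / 2
  · obtain ⟨m, rfl⟩ : ∃ m, n = m + 2 := ⟨n - 2, by omega⟩
    rw [show m + 2 - 1 = m + 1 by omega]
    push_cast
    field_simp
    linear_combination hfirst m
  · obtain ⟨m, rfl⟩ : ∃ m, n = m + 3 := ⟨n - 3, by omega⟩
    simp only [show m + 3 - 1 = m + 2 by omega, show ∀ j, m + 3 - 2 - j = m + 1 - j by omega]
    have hweight : ∀ j : ℕ, 2 * ((m + 3 : ℕ) : ℝ) - 4 - j = 2 * ((m : ℝ) + 1 - j) + j := by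
      intro j; push_cast; ring
    have hP : ((m + 3 : ℕ) : ℝ) * ((m + 3 : ℕ) - 1) * ((m + 3 : ℕ) - 2) =
        (m + 1) * (m + 2) * (m + 3) := by
      push_cast; ring
    simp only [hweight, hP]
    field_simp
    linear_combination hsecond m
end
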